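/- arXiv:2408.15228 — 11 statements merged into one kernel-verified Lean document; each statement's English description precedes it below -/
import Mathlib

section
/- Let G and H be finite graphs and let ⊐ ⊆ H × G be a co-surjective, edge-preserving and edge-surjective relation. Then ⊐ has a consolidation realisation: there exist overlap realisations (s_g)_{g∈G} of G and (t_h)_{h∈H} of H such that for all g ∈ G and h ∈ H one has g ⊏ h if and only if s_g ⊆ t_h, and the family (t_h)_{h∈H} consolidates the family (s_g)_{g∈G}. If ⊐ is moreover co-injective, then both overlap realisations can be chosen non-degenerate. -/
def EdgePreserving {G : Type*} {H : Type*} (sqG : G → G → Prop) (sqH : H → H → Prop)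
    (R : H → G → Prop) : Prop :=
  ∀ h g g' h', R h g → sqG g g' → R h' g' → sqH h h'

def EdgeSurjective {G : Type*} {H : Type*} (sqG : G → G → Prop) (sqH : H → H → Prop)
    (R : H → G → Prop) : Prop :=
  ∀ h h', sqH h h' → ∃ g g', R h g ∧ sqG g g' ∧ R h' g'

def EdgeWitnessing {G : Type*} {H : Type*} (sqH : H → H → Prop) (R : H → G → Prop) : Prop :=
  ∀ h h', sqH h h' → ∃ g, R h g ∧ R h' g

def CoSurjective {G : Type*} {H : Type*} (R : H → G → Prop) : Prop :=
  ∀ g, ∃ h, R h g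

def CoInjective {G : Type*} {H : Type*} (R : H → G → Prop) : Prop :=
  ∀ h, ∃ g, {h' | R h' g} = {h}

def RelSurjective {G : Type*} {H : Type*} (R : H → G → Prop) : Prop :=
  ∀ h, ∃ g, R h g

def StarRefining {G : Type*} {H : Type*} (sqG : G → G → Prop) (R : H → G → Prop) : Prop :=
  ∀ g, ∃ h, ∀ g', sqG g' g → R h g'

def CoEdgeWitnessing {G : Type*} {H : Type*} (sqG : G → G → Prop) (R : H → G → Prop) : Prop :=
  ∀ f g, sqG f g → ∃ h, R h f ∧ R h g

def AntiInjective {G : Type*} {H : Type*} (R : H → G → Prop) : Prop :=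
  ∀ h, ∃ g g', g ≠ g' ∧ R h g ∧ R h g'

def RelComp {A : Type*} {B : Type*} {C : Type*} (R : A → B → Prop) (S : B → C → Prop) :
    A → C → Prop :=
  fun a c => ∃ b, R a b ∧ S b c

def IsConn {V : Type*} (sq : V → V → Prop) (C : Set V) : Prop :=
  ∀ A B : Set V, A ∪ B = C → Disjoint A B → A.Nonempty → B.Nonempty →
    ∃ a ∈ A, ∃ b ∈ B, sq a b

def Preim {G : Type*} {H : Type*} (R : H → G → Prop) (C : Set H) : Set G :=
  {g | ∃ h ∈ C, R h g}

def Img {G : Type*} {H : Type*} (R : H → G → Prop) (C : Set G) : Set H :=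
  {h | ∃ g ∈ C, R h g}

def RelMonotone {G : Type*} {H : Type*} (sqG : G → G → Prop) (sqH : H → H → Prop)
    (R : H → G → Prop) : Prop :=
  ∀ C : Set H, IsConn sqH C → IsConn sqG (Preim R C)

def TriangleFree {V : Type*} (sq : V → V → Prop) : Prop :=
  ∀ a b c : V, a ≠ b → b ≠ c → a ≠ c → sq a b → sq b c → sq a c → False

def simpleOf {V : Type*} (sq : V → V → Prop) (hsym : ∀ a b, sq a b → sq b a) :
    SimpleGraph V where
  Adj a b := a ≠ b ∧ sq a b
  symm := by
    constructor
    intro a b h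
    exact ⟨Ne.symm h.1, hsym a b h.2⟩
  loopless := by
    constructor
    intro a h
    exact h.1 rfl

def IsCliqueSet {V : Type*} (sq : V → V → Prop) (C : Set V) : Prop :=
  C.Nonempty ∧ ∀ a ∈ C, ∀ b ∈ C, sq a b

def IsPathGraph {V : Type*} (sq : V → V → Prop) : Prop :=
  IsConn sq Set.univ ∧ (∀ v : V, {w | w ≠ v ∧ sq v w}.ncard ≤ 2) ∧
    ∃ v : V, {w | w ≠ v ∧ sq v w}.ncard ≤ 1

def EdgeReflective {A : Type*} {B : Type*} (sqA : A → A → Prop) (sqB : B → B → Prop)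
    (R : A → B → Prop) : Prop :=
  ∀ a a', a ≠ a' → sqA a a' →
    ∃ b b', ({x | R x b} = {a}) ∧ R a' b' ∧ sqB b b' ∧
      ∀ c c', ({x | R x c} = {a}) → R a' c' → sqB c c' → c = b ∧ c' = b'

theorem stmt_2 {G : Type*} {H : Type*} [Finite G] [Nonempty G] [Finite H] [Nonempty H]
    (sqG : G → G → Prop) (sqH : H → H → Prop)
    (hGr : ∀ g, sqG g g) (hGs : ∀ a b, sqG a b → sqG b a)
    (hHr : ∀ h, sqH h h) (hHs : ∀ a b, sqH a b → sqH b a)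
    (R : H → G → Prop)
    (hco : CoSurjective R) (hep : EdgePreserving sqG sqH R)
    (hes : EdgeSurjective sqG sqH R) :
    (∃ (s : G → Set (Set G)) (t : H → Set (Set G)),
      (∀ g g', sqG g g' ↔ (s g ∩ s g').Nonempty) ∧
      (∀ h h', sqH h h' ↔ (t h ∩ t h').Nonempty) ∧
      (∀ g h, R h g ↔ s g ⊆ t h) ∧
      (∀ g, ∃ h, s g ⊆ t h) ∧
      (∀ h, t h = ⋃ (g : G) (_ : s g ⊆ t h), s g)) ∧
    (CoInjective R →
      ∃ (s : G → Set (Set G)) (t : H → Set (Set G)),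
        (∀ g g', sqG g g' ↔ (s g ∩ s g').Nonempty) ∧
        (∀ h h', sqH h h' ↔ (t h ∩ t h').Nonempty) ∧
        (∀ g h, R h g ↔ s g ⊆ t h) ∧
        (∀ g, ∃ h, s g ⊆ t h) ∧
        (∀ h, t h = ⋃ (g : G) (_ : s g ⊆ t h), s g) ∧
        (∀ g, (s g \ ⋃ (g' : G) (_ : g' ≠ g), s g').Nonempty) ∧
        (∀ h, (t h \ ⋃ (h' : H) (_ : h' ≠ h), t h').Nonempty)) := by
  classical
  set s : G → Set (Set G) := fun g => {p | ∃ g', sqG g g' ∧ p = {g, g'}} with hsdef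
  set t : H → Set (Set G) := fun h => {p | ∃ g, R h g ∧ p ∈ s g} with htdef
  have hsing : ∀ g g', ({g} : Set G) ∈ s g' ↔ g' = g := by
    intro g g'
    constructor
    · rintro ⟨a, _, hp⟩
      have : g' ∈ ({g} : Set G) := by rw [hp]; left; rfl
      exact this
    · rintro rfl
      exact ⟨_, hGr _, (Set.pair_eq_singleton _).symm⟩
  have hmem : ∀ g, ({g} : Set G) ∈ s g := fun g => (hsing g g).2 rfl
  have hov : ∀ g g', sqG g g' ↔ (s g ∩ s g').Nonempty := by
    intro g g'
    constructor
    · intro hgg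
      exact ⟨{g, g'}, ⟨g', hgg, rfl⟩, ⟨g, hGs _ _ hgg, Set.pair_comm g g'⟩⟩
    · rintro ⟨p, ⟨a, ha, rfl⟩, ⟨b, hb, hp⟩⟩
      by_cases hgg : g' = g
      · exact hgg ▸ hGr g
      · have hg' : g' ∈ ({g, a} : Set G) := by rw [hp]; left; rfl
        rcases hg' with h1 | h1
        · exact absurd h1 hgg
        · rw [← h1] at ha; exact ha
  have hsub : ∀ g h, R h g ↔ s g ⊆ t h := by
    intro g h
    constructor
    · intro hR p hp
      exact ⟨g, hR, hp⟩
    · intro hsub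
      obtain ⟨g'', hR, hg⟩ := hsub (hmem g)
      rwa [(hsing g g'').1 hg] at hR
  have htov : ∀ h h', sqH h h' ↔ (t h ∩ t h').Nonempty := by
    intro h h'
    constructor
    · intro hhh
      obtain ⟨g, g', hRg, hgg, hRg'⟩ := hes h h' hhh
      obtain ⟨p, hp1, hp2⟩ := (hov g g').1 hgg
      exact ⟨p, ⟨g, hRg, hp1⟩, ⟨g', hRg', hp2⟩⟩
    · rintro ⟨p, ⟨a, hRa, hpa⟩, ⟨b, hRb, hpb⟩⟩
      exact hep h a b h' hRa ((hov a b).2 ⟨p, hpa, hpb⟩) hRb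
  have hcons : ∀ h, t h = ⋃ (g : G) (_ : s g ⊆ t h), s g := by
    intro h
    ext p
    simp only [Set.mem_iUnion]
    constructor
    · rintro ⟨g, hR, hp⟩
      exact ⟨g, (hsub g h).1 hR, hp⟩
    · rintro ⟨g, hg, hp⟩
      exact ⟨g, (hsub g h).2 hg, hp⟩
  have hex : ∀ g, ∃ h, s g ⊆ t h := by
    intro g
    obtain ⟨h, hR⟩ := hco g
    exact ⟨h, (hsub g h).1 hR⟩
  refine ⟨⟨s, t, hov, htov, hsub, hex, hcons⟩, ?_⟩
  intro hci
  refine ⟨s, t, hov, htov, hsub, hex, hcons, ?_, ?_⟩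
  · intro g
    refine ⟨{g}, hmem g, ?_⟩
    simp only [Set.mem_iUnion, not_exists]
    intro g' hne hg
    exact hne ((hsing g g').1 hg)
  · intro h
    obtain ⟨g, hg⟩ := hci h
    have hRg : R h g := by
      have : h ∈ {h' | R h' g} := by rw [hg]; rfl
      exact this
    refine ⟨{g}, ⟨g, hRg, hmem g⟩, ?_⟩
    simp only [Set.mem_iUnion, not_exists]
    rintro h' hne ⟨g'', hR, hgm⟩
    rw [(hsing g g'').1 hgm] at hR
    have : h' ∈ ({h} : Set H) := by rw [← hg]; exact hR
    exact hne this
end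

section
/- Star-refining morphisms form a two-sided ideal among co-surjective edge-preserving relations between finite graphs: if ⊐ ⊆ H × G is edge-preserving, co-surjective and star-refining, then (i) for any edge-preserving co-surjective ⊨ ⊆ I × H, the composition ⊨ ∘ ⊐ ⊆ I × G (where i (⊨∘⊐) g iff ∃h, i ⊨ h and h ⊐ g) is star-refining; and (ii) for any edge-preserving co-surjective ⊨' ⊆ G × F, the composition ⊐ ∘ ⊨' ⊆ H × F is star-refining. -/
theorem stmt_3 {G H I F : Type*}
    [Finite G] [Nonempty G] [Finite H] [Nonempty H]
    [Finite I] [Nonempty I] [Finite F] [Nonempty F]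
    (sqG : G → G → Prop) (sqH : H → H → Prop) (sqI : I → I → Prop) (sqF : F → F → Prop)
    (hGr : ∀ g, sqG g g) (hGs : ∀ a b, sqG a b → sqG b a)
    (hHr : ∀ h, sqH h h) (hHs : ∀ a b, sqH a b → sqH b a)
    (hIr : ∀ i, sqI i i) (hIs : ∀ a b, sqI a b → sqI b a)
    (hFr : ∀ f, sqF f f) (hFs : ∀ a b, sqF a b → sqF b a)
    (R : H → G → Prop)
    (hRep : EdgePreserving sqG sqH R) (hRco : CoSurjective R) (hRst : StarRefining sqG R)
    (S : I → H → Prop)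
    (hSep : EdgePreserving sqH sqI S) (hSco : CoSurjective S)
    (S' : G → F → Prop)
    (hS'ep : EdgePreserving sqF sqG S') (hS'co : CoSurjective S') :
    StarRefining sqG (RelComp S R) ∧ StarRefining sqF (RelComp R S') := by
  constructor
  · intro g
    obtain ⟨h, hh⟩ := hRst g
    obtain ⟨i, hi⟩ := hSco h
    exact ⟨i, fun g' hg' => ⟨h, hi, hh g' hg'⟩⟩
  · intro f
    obtain ⟨g, hg⟩ := hS'co f
    obtain ⟨h, hh⟩ := hRst g
    refine ⟨h, fun f' hf' => ?_⟩
    obtain ⟨g', hg'⟩ := hS'co f'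
    exact ⟨g', hh g' (hS'ep g' f' f g hg' hf' hg), hg'⟩
end

section
/- Edge-witnessing morphisms form a two-sided ideal among edge-surjective edge-preserving relations between finite graphs: if ⊐ ⊆ H × G is edge-preserving, edge-surjective and edge-witnessing, then (i) for any edge-preserving edge-surjective ⊨ ⊆ I × H, the composition ⊨ ∘ ⊐ ⊆ I × G is edge-witnessing; and (ii) for any edge-preserving edge-surjective ⊨' ⊆ G × F, the composition ⊐ ∘ ⊨' ⊆ H × F is edge-witnessing. -/
theorem stmt_4 {G H I F : Type*}
    [Finite G] [Nonempty G] [Finite H] [Nonempty H]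
    [Finite I] [Nonempty I] [Finite F] [Nonempty F]
    (sqG : G → G → Prop) (sqH : H → H → Prop) (sqI : I → I → Prop) (sqF : F → F → Prop)
    (hGr : ∀ g, sqG g g) (hGs : ∀ a b, sqG a b → sqG b a)
    (hHr : ∀ h, sqH h h) (hHs : ∀ a b, sqH a b → sqH b a)
    (hIr : ∀ i, sqI i i) (hIs : ∀ a b, sqI a b → sqI b a)
    (hFr : ∀ f, sqF f f) (hFs : ∀ a b, sqF a b → sqF b a)
    (R : H → G → Prop)
    (hRep : EdgePreserving sqG sqH R) (hRes : EdgeSurjective sqG sqH R)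
    (hRew : EdgeWitnessing sqH R)
    (S : I → H → Prop)
    (hSep : EdgePreserving sqH sqI S) (hSes : EdgeSurjective sqH sqI S)
    (S' : G → F → Prop)
    (hS'ep : EdgePreserving sqF sqG S') (hS'es : EdgeSurjective sqF sqG S') :
    EdgeWitnessing sqI (RelComp S R) ∧ EdgeWitnessing sqH (RelComp R S') := by
  constructor
  · intro i i' hii
    obtain ⟨h, h', hSi, hhh, hSi'⟩ := hSes i i' hii
    obtain ⟨g, hRg, hR'g⟩ := hRew h h' hhh
    exact ⟨g, ⟨h, hSi, hRg⟩, ⟨h', hSi', hR'g⟩⟩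
  · intro h h' hhh
    obtain ⟨g, hRg, hR'g⟩ := hRew h h' hhh
    obtain ⟨f, f', hf, _, _⟩ := hS'es g g (hGr g)
    exact ⟨f, ⟨g, hRg, hf⟩, ⟨g, hR'g, hf⟩⟩
end

section
/- Let G, H be finite graphs and let ⊐ ⊆ H × G be edge-preserving and co-injective. (i) If H has no isolated vertices and ⊐ is edge-witnessing, then ⊐ is anti-injective. (ii) If G has no isolated vertices and ⊐ is star-refining, then ⊐ is anti-injective. -/
theorem stmt_7 {G H : Type*}
    [Finite G] [Nonempty G] [Finite H] [Nonempty H]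
    (sqG : G → G → Prop) (sqH : H → H → Prop)
    (hGr : ∀ g, sqG g g) (hGs : ∀ a b, sqG a b → sqG b a)
    (hHr : ∀ h, sqH h h) (hHs : ∀ a b, sqH a b → sqH b a)
    (R : H → G → Prop) (hep : EdgePreserving sqG sqH R) (hci : CoInjective R) :
    ((∀ h : H, ∃ h', h' ≠ h ∧ sqH h h') → EdgeWitnessing sqH R → AntiInjective R) ∧
    ((∀ g : G, ∃ g', g' ≠ g ∧ sqG g g') → StarRefining sqG R → AntiInjective R) := by
  constructor
  · intro hiso hew h
    obtain ⟨h', hne, hadj⟩ := hiso h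
    obtain ⟨g, hg, hg'⟩ := hew h h' hadj
    obtain ⟨g0, hg0⟩ := hci h
    have hRh : R h g0 := by
      have : h ∈ ({h} : Set H) := rfl
      rw [← hg0] at this; exact this
    refine ⟨g0, g, ?_, hRh, hg⟩
    intro e
    have : h' ∈ {x | R x g0} := by rw [e]; exact hg'
    rw [hg0] at this
    exact hne this
  · intro hiso hsr h
    obtain ⟨g0, hg0⟩ := hci h
    have hRh : R h g0 := by
      have : h ∈ ({h} : Set H) := rfl
      rw [← hg0] at this; exact this
    obtain ⟨g', hne, hadj⟩ := hiso g0
    obtain ⟨h1, hh1⟩ := hsr g0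
    have h1R : R h1 g0 := hh1 g0 (hGr g0)
    have : h1 ∈ {x | R x g0} := h1R
    rw [hg0] at this
    subst this
    exact ⟨g0, g', hne.symm, hRh, hh1 g' (hGs _ _ hadj)⟩
end

section
/- Let G be a connected finite graph, let H be an acyclic finite graph, and let ⊐ ⊆ H × G be edge-preserving and co-surjective. If ⊐ is surjective, then ⊐ is edge-surjective. -/
theorem stmt_8 {G H : Type*}
    [Finite G] [Nonempty G] [Finite H] [Nonempty H]
    (sqG : G → G → Prop) (sqH : H → H → Prop)
    (hGr : ∀ g, sqG g g) (hGs : ∀ a b, sqG a b → sqG b a)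
    (hHr : ∀ h, sqH h h) (hHs : ∀ a b, sqH a b → sqH b a)
    (hGconn : IsConn sqG Set.univ)
    (hHacyc : (simpleOf sqH hHs).IsAcyclic)
    (R : H → G → Prop) (hep : EdgePreserving sqG sqH R) (hco : CoSurjective R)
    (hsurj : RelSurjective R) :
    EdgeSurjective sqG sqH R := by
  intro h h' hhh
  obtain ⟨g0, hg0⟩ := hsurj h
  obtain ⟨g1, hg1⟩ := hsurj h'
  by_cases heq : h = h'
  · exact ⟨g0, g0, hg0, hGr g0, heq ▸ hg0⟩
  set H' := simpleOf sqH hHs with hH'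
  have hadj : H'.Adj h h' := ⟨heq, hhh⟩
  have hbr : H'.IsBridge s(h, h') :=
    SimpleGraph.isAcyclic_iff_forall_adj_isBridge.mp hHacyc hadj
  have hnr : ¬ (H' \ SimpleGraph.fromEdgeSet {s(h, h')}).Reachable h h' :=
    SimpleGraph.isBridge_iff.mp hbr
  set D := H' \ SimpleGraph.fromEdgeSet {s(h, h')} with hD
  set A : Set H := {x | D.Reachable h x} with hA
  have hhA : h ∈ A := SimpleGraph.Reachable.refl h
  have hh'A : h' ∉ A := hnr
  have key : ∀ x y, x ∈ A → sqH x y → y ∈ A ∨ (x = h ∧ y = h') := by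
    intro x y hx hxy
    by_cases hxy' : x = y
    · exact Or.inl (hxy' ▸ hx)
    by_cases hc : x = h ∧ y = h'
    · exact Or.inr hc
    left
    refine SimpleGraph.Reachable.trans hx (SimpleGraph.Adj.reachable ?_)
    rw [hD, SimpleGraph.sdiff_adj]
    refine ⟨⟨hxy', hxy⟩, ?_⟩
    rw [SimpleGraph.fromEdgeSet_adj]
    rintro ⟨hmem, -⟩
    simp only [Set.mem_singleton_iff, Sym2.eq, Sym2.rel_iff'] at hmem
    rcases hmem with ⟨rfl, rfl⟩ | ⟨rfl, rfl⟩
    · exact hc ⟨rfl, rfl⟩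
    · exact hh'A hx
  set P : Set G := {g | ∃ x ∈ A, R x g} with hP
  by_cases hg1P : g1 ∈ P
  · obtain ⟨x, hxA, hxg1⟩ := hg1P
    have hxh' : sqH x h' := hep x g1 g1 h' hxg1 (hGr g1) hg1
    rcases key x h' hxA hxh' with hbad | ⟨rfl, -⟩
    · exact absurd hbad hh'A
    · exact ⟨g1, g1, hxg1, hGr g1, hg1⟩
  · obtain ⟨g, hgP, g', hg'P, hgg'⟩ :=
      hGconn P (Set.univ \ P) (by simp) Set.disjoint_sdiff_right
        ⟨g0, h, hhA, hg0⟩ ⟨g1, Set.mem_diff_of_mem trivial hg1P⟩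
    obtain ⟨x, hxA, hxg⟩ := hgP
    obtain ⟨y, hyg'⟩ := hco g'
    have hyA : y ∉ A := fun hy => hg'P.2 ⟨y, hy, hyg'⟩
    have hxy : sqH x y := hep x g g' y hxg hgg' hyg'
    rcases key x y hxA hxy with hbad | ⟨rfl, rfl⟩
    · exact absurd hbad hyA
    · exact ⟨g, g', hxg, hgg', hyg'⟩
end

section
/- Let G, H be finite graphs and let ⊐ ⊆ H × G be edge-preserving. (i) If ⊐ is surjective and monotone, then ⊐ is edge-surjective. (ii) Conversely, if ⊐ is edge-surjective and the preimage {g : h ⊐ g} is connected for every h ∈ H, then ⊐ is monotone. -/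
theorem stmt_9 {G H : Type*}
    [Finite G] [Nonempty G] [Finite H] [Nonempty H]
    (sqG : G → G → Prop) (sqH : H → H → Prop)
    (hGr : ∀ g, sqG g g) (hGs : ∀ a b, sqG a b → sqG b a)
    (hHr : ∀ h, sqH h h) (hHs : ∀ a b, sqH a b → sqH b a)
    (R : H → G → Prop) (hep : EdgePreserving sqG sqH R) :
    (RelSurjective R → RelMonotone sqG sqH R → EdgeSurjective sqG sqH R) ∧
    (EdgeSurjective sqG sqH R → (∀ h : H, IsConn sqG {g | R h g}) →
      RelMonotone sqG sqH R) := by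
  constructor
  · intro hsur hmon h h' hhh'
    have hconn : IsConn sqH ({h, h'} : Set H) := by
      intro A B hAB hdis hA hB
      obtain ⟨a, ha⟩ := hA
      obtain ⟨b, hb⟩ := hB
      have haC : a ∈ ({h, h'} : Set H) := hAB ▸ Set.mem_union_left _ ha
      have hbC : b ∈ ({h, h'} : Set H) := hAB ▸ Set.mem_union_right _ hb
      refine ⟨a, ha, b, hb, ?_⟩
      rcases haC with rfl | rfl <;> rcases hbC with rfl | rfl
      · exact hHr _
      · exact hhh'
      · exact hHs _ _ hhh'
      · exact hHr _
    have hP := hmon _ hconn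
    obtain ⟨g0, hg0⟩ := hsur h
    by_cases hsplit : ∃ g, R h' g ∧ ¬ R h g
    · obtain ⟨g1, hg1, hg1n⟩ := hsplit
      have := hP {g | g ∈ Preim R {h, h'} ∧ R h g} {g | g ∈ Preim R {h, h'} ∧ ¬ R h g}
        (by
          ext g
          constructor
          · rintro (⟨hg, -⟩ | ⟨hg, -⟩) <;> exact hg
          · intro hg
            by_cases hr : R h g
            · exact Or.inl ⟨hg, hr⟩
            · exact Or.inr ⟨hg, hr⟩)
        (by
          rw [Set.disjoint_left]
          rintro g ⟨-, hr⟩ ⟨-, hnr⟩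
          exact hnr hr)
        ⟨g0, ⟨h, Or.inl rfl, hg0⟩, hg0⟩
        ⟨g1, ⟨h', Or.inr rfl, hg1⟩, hg1n⟩
      obtain ⟨a, ⟨-, haR⟩, b, ⟨⟨hb, hbC, hbR⟩, hbn⟩, hab⟩ := this
      rcases hbC with rfl | rfl
      · exact absurd hbR hbn
      · exact ⟨a, b, haR, hab, hbR⟩
    · push_neg at hsplit
      obtain ⟨g1, hg1⟩ := hsur h'
      exact ⟨g1, g1, hsplit g1 hg1, hGr g1, hg1⟩
  · intro hes hfib C hC A B hAB hdis hA hB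
    have hsur : ∀ h : H, ∃ g, R h g := by
      intro h
      obtain ⟨g, g', hg, -, -⟩ := hes h h (hHr h)
      exact ⟨g, hg⟩
    by_cases hsplit : ∃ h ∈ C, ({g | R h g} ∩ A).Nonempty ∧ ({g | R h g} ∩ B).Nonempty
    · obtain ⟨h, hhC, hA', hB'⟩ := hsplit
      have := hfib h ({g | R h g} ∩ A) ({g | R h g} ∩ B)
        (by
          ext g
          constructor
          · rintro (⟨hg, -⟩ | ⟨hg, -⟩) <;> exact hg
          · intro hg
            have : g ∈ A ∪ B := hAB ▸ ⟨h, hhC, hg⟩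
            rcases this with hgA | hgB
            · exact Or.inl ⟨hg, hgA⟩
            · exact Or.inr ⟨hg, hgB⟩)
        (hdis.mono Set.inter_subset_right Set.inter_subset_right)
        hA' hB'
      obtain ⟨a, ⟨-, haA⟩, b, ⟨-, hbB⟩, hab⟩ := this
      exact ⟨a, haA, b, hbB, hab⟩
    · push_neg at hsplit
      have hfull : ∀ h ∈ C, ∀ g, R h g → g ∈ A ∪ B := by
        intro h hhC g hg
        exact hAB ▸ ⟨h, hhC, hg⟩
      have := hC {h ∈ C | ∃ g ∈ A, R h g} {h ∈ C | ∃ g ∈ B, R h g}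
        (by
          ext h
          constructor
          · rintro (⟨hh, -⟩ | ⟨hh, -⟩) <;> exact hh
          · intro hh
            obtain ⟨g, hg⟩ := hsur h
            rcases hfull h hh g hg with hgA | hgB
            · exact Or.inl ⟨hh, g, hgA, hg⟩
            · exact Or.inr ⟨hh, g, hgB, hg⟩)
        (by
          rw [Set.disjoint_left]
          rintro h ⟨hh, ga, hgaA, hga⟩ ⟨-, gb, hgbB, hgb⟩
          exact Set.eq_empty_iff_forall_notMem.mp (hsplit h hh ⟨ga, hga, hgaA⟩)
            gb ⟨hgb, hgbB⟩)
        (by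
          obtain ⟨a, haA⟩ := hA
          have : a ∈ Preim R C := hAB ▸ Set.mem_union_left _ haA
          obtain ⟨h, hhC, hh⟩ := this
          exact ⟨h, hhC, a, haA, hh⟩)
        (by
          obtain ⟨b, hbB⟩ := hB
          have : b ∈ Preim R C := hAB ▸ Set.mem_union_right _ hbB
          obtain ⟨h, hhC, hh⟩ := this
          exact ⟨h, hhC, b, hbB, hh⟩)
      obtain ⟨h, ⟨hhC, ga, hgaA, hga⟩, h', ⟨hh'C, gb, hgbB, hgb⟩, hhh'⟩ := this
      obtain ⟨g, g', hg, hgg', hg'⟩ := hes h h' hhh'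
      have hgA : g ∈ A := by
        rcases hfull h hhC g hg with h1 | h1
        · exact h1
        · exact (Set.eq_empty_iff_forall_notMem.mp
            (hsplit h hhC ⟨ga, hga, hgaA⟩) g ⟨hg, h1⟩).elim
      have hg'B : g' ∈ B := by
        rcases hfull h' hh'C g' hg' with h1 | h1
        · exact (Set.eq_empty_iff_forall_notMem.mp
            (hsplit h' hh'C ⟨g', hg', h1⟩) gb ⟨hgb, hgbB⟩).elim
        · exact h1
      exact ⟨g, hgA, g', hg'B, hgg'⟩
end

section
/- Let G be an acyclic finite graph, let H be a finite graph, and let ⊐ ⊆ H × G be edge-preserving, co-surjective and monotone. If ⊐ is edge-witnessing, then ⊐ is co-edge-witnessing. -/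
theorem stmt_10 {G H : Type*}
    [Finite G] [Nonempty G] [Finite H] [Nonempty H]
    (sqG : G → G → Prop) (sqH : H → H → Prop)
    (hGr : ∀ g, sqG g g) (hGs : ∀ a b, sqG a b → sqG b a)
    (hHr : ∀ h, sqH h h) (hHs : ∀ a b, sqH a b → sqH b a)
    (hGacyc : (simpleOf sqG hGs).IsAcyclic)
    (R : H → G → Prop) (hep : EdgePreserving sqG sqH R) (hco : CoSurjective R)
    (hmono : RelMonotone sqG sqH R) (hew : EdgeWitnessing sqH R) :
    CoEdgeWitnessing sqG R := by
  intro f g hfg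
  by_cases hfg' : f = g
  · obtain ⟨h, hh⟩ := hco f
    exact ⟨h, hh, hfg' ▸ hh⟩
  by_contra hno
  push_neg at hno
  -- set up the tree machinery
  set T : SimpleGraph G := simpleOf sqG hGs with hT
  have hTadj : T.Adj f g := ⟨hfg', hfg⟩
  have hbridge : T.IsBridge s(f, g) :=
    (SimpleGraph.isAcyclic_iff_forall_adj_isBridge.mp hGacyc) hTadj
  set D : SimpleGraph G := T \ SimpleGraph.fromEdgeSet {s(f, g)} with hD
  have hnotreach : ¬ D.Reachable f g := fun hr => SimpleGraph.isBridge_iff.mp hbridge hr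
  -- key lemma: a crossing edge must be the edge f-g
  have key : ∀ a b : G, D.Reachable a f → ¬ D.Reachable b f → sqG a b → a = f ∧ b = g := by
    intro a b ha hb hab
    have hne : a ≠ b := by rintro rfl; exact hb ha
    by_cases he : s(a, b) = s(f, g)
    · rcases Sym2.eq_iff.mp he with ⟨rfl, rfl⟩ | ⟨rfl, rfl⟩
      · exact ⟨rfl, rfl⟩
      · exact absurd ha (fun h => hnotreach h.symm)
    · exfalso
      have hDab : D.Adj b a := by
        rw [hD, SimpleGraph.sdiff_adj, SimpleGraph.fromEdgeSet_adj]
        refine ⟨⟨hne.symm, hGs a b hab⟩, fun hc => ?_⟩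
        exact he ((Sym2.eq_swap).trans (Set.mem_singleton_iff.mp hc.1))
      exact hb (hDab.reachable.trans ha)
  -- fibers are connected
  have hfib : ∀ h : H, IsConn sqG (Preim R {h}) := by
    intro h
    apply hmono
    intro A B hAB hdisj ⟨a, haA⟩ ⟨b, hbB⟩
    have ha : a = h := by
      have : a ∈ A ∪ B := Or.inl haA
      rw [hAB] at this; exact this
    have hb : b = h := by
      have : b ∈ A ∪ B := Or.inr hbB
      rw [hAB] at this; exact this
    exfalso
    have hab : a = b := ha.trans hb.symm
    rw [hab] at haA
    exact Set.disjoint_left.mp hdisj haA hbB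
  -- fiber of h with R h f stays on the f-side
  have hFside : ∀ h : H, R h f → ∀ u, R h u → D.Reachable u f := by
    intro h hhf u hhu
    by_contra hu
    have hconn := hfib h
    set A : Set G := {x ∈ Preim R {h} | D.Reachable x f} with hA
    set B : Set G := {x ∈ Preim R {h} | ¬ D.Reachable x f} with hB
    have hmem : ∀ x, R h x → x ∈ Preim R {h} := fun x hx => ⟨h, rfl, hx⟩
    obtain ⟨a, haA, b, hbB, hab⟩ := hconn A B
      (by ext x; simp only [hA, hB, Set.mem_union, Set.mem_setOf_eq]; tauto)
      (Set.disjoint_left.mpr (fun x hx hx' => hx'.2 hx.2))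
      ⟨f, hmem f hhf, SimpleGraph.Reachable.refl f⟩
      ⟨u, hmem u hhu, hu⟩
    obtain ⟨rfl, rfl⟩ := key a b haA.2 hbB.2 hab
    rcases hbB.1 with ⟨h', hh', hh'g⟩
    exact hno h (hhf) (hh' ▸ hh'g)
  -- fiber of h' with R h' g stays off the f-side
  have hGside : ∀ h : H, R h g → ∀ u, R h u → ¬ D.Reachable u f := by
    intro h hhg u hhu hu
    have hgnot : ¬ D.Reachable g f := fun hc => hnotreach hc.symm
    have hconn := hfib h
    set A : Set G := {x ∈ Preim R {h} | D.Reachable x f} with hA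
    set B : Set G := {x ∈ Preim R {h} | ¬ D.Reachable x f} with hB
    have hmem : ∀ x, R h x → x ∈ Preim R {h} := fun x hx => ⟨h, rfl, hx⟩
    obtain ⟨a, haA, b, hbB, hab⟩ := hconn A B
      (by ext x; simp only [hA, hB, Set.mem_union, Set.mem_setOf_eq]; tauto)
      (Set.disjoint_left.mpr (fun x hx hx' => hx'.2 hx.2))
      ⟨u, hmem u hhu, hu⟩
      ⟨g, hmem g hhg, hgnot⟩
    obtain ⟨rfl, rfl⟩ := key a b haA.2 hbB.2 hab
    rcases haA.1 with ⟨h', hh', hh'f⟩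
    exact hno h (hh' ▸ hh'f) hhg
  -- main argument
  obtain ⟨h, hhf⟩ := hco f
  obtain ⟨h', hh'g⟩ := hco g
  have hHhh' : sqH h h' := hep h f g h' hhf hfg hh'g
  obtain ⟨x, hhx, hh'x⟩ := hew h h' hHhh'
  exact hGside h' hh'g x hh'x (hFside h hhf x hhx)
end

section
/- Let T be a finite tree, let G be a connected finite graph, and let ⊐ ⊆ T × G be edge-preserving, co-surjective and edge-reflective. Then for every connected C ⊆ T the preimage C^⊐ is connected; moreover, for every t ∈ T the strict preimage t_⊐ is connected, and for all adjacent s, t ∈ T both the strict preimage {s,t}_⊐ and the edge-preimage {s,t}•_⊐ are connected (where the empty set counts as connected). In particular, ⊐ is monotone. -/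
section Aux
open List Relation

namespace St11

variable {V : Type*}

/-- reachability within a set -/
def rch (sq : V → V → Prop) (S : Set V) : V → V → Prop :=
  Relation.ReflTransGen (fun x y => x ∈ S ∧ y ∈ S ∧ sq x y)

lemma rch_symm {sq : V → V → Prop} (hs : ∀ a b, sq a b → sq b a) {S : Set V} {a b : V}
    (h : rch sq S a b) : rch sq S b a :=
  (@Relation.ReflTransGen.stdSymm _ _ ⟨fun x y hxy => ⟨hxy.2.1, hxy.1, hs _ _ hxy.2.2⟩⟩).symm _ _ h

lemma rch_mono {sq : V → V → Prop} {S S' : Set V} (hss : S ⊆ S') {a b : V}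
    (h : rch sq S a b) : rch sq S' a b :=
  Relation.ReflTransGen.mono (fun x y hxy => ⟨hss hxy.1, hss hxy.2.1, hxy.2.2⟩) _ _ h

lemma conn_rch {sq : V → V → Prop} {S : Set V} (h : IsConn sq S) {a b : V}
    (ha : a ∈ S) (hb : b ∈ S) : rch sq S a b := by
  by_contra hnr
  have hb' : b ∈ S \ {x | x ∈ S ∧ rch sq S a x} := ⟨hb, fun hbA => hnr hbA.2⟩
  obtain ⟨x, hx, y, hy, hxy⟩ := h {x | x ∈ S ∧ rch sq S a x} (S \ {x | x ∈ S ∧ rch sq S a x})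
    (by
      ext z; constructor
      · rintro (⟨h1, _⟩ | ⟨h1, _⟩) <;> exact h1
      · intro hz
        by_cases hza : z ∈ {x | x ∈ S ∧ rch sq S a x}
        exacts [Or.inl hza, Or.inr ⟨hz, hza⟩])
    (by rw [Set.disjoint_left]; rintro z hz hz2; exact hz2.2 hz)
    ⟨a, ha, Relation.ReflTransGen.refl⟩ ⟨b, hb'⟩
  exact hy.2 ⟨hy.1, hx.2.tail ⟨hx.1, hy.1, hxy⟩⟩

lemma rch_conn {sq : V → V → Prop} {S : Set V} (h : ∀ a ∈ S, ∀ b ∈ S, rch sq S a b) :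
    IsConn sq S := by
  rintro A B hUn hDis ⟨a, ha⟩ ⟨b, hb⟩
  have haS : a ∈ S := hUn ▸ Or.inl ha
  have hbS : b ∈ S := hUn ▸ Or.inr hb
  have key : ∀ x, rch sq S x b → x ∈ A → ∃ p ∈ A, ∃ q ∈ B, sq p q := by
    intro x hx
    induction hx using Relation.ReflTransGen.head_induction_on with
    | refl => exact fun hbA => (Set.disjoint_left.1 hDis hbA hb).elim
    | head step tail ih =>
      intro hA
      rcases (hUn ▸ step.2.1 : _ ∈ A ∪ B) with hcA | hcB
      · exact ih hcA
      · exact ⟨_, hA, _, hcB, step.2.2⟩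
  exact key a (h a haS b hbS) ha

lemma conn_single {sq : V → V → Prop} (t : V) : IsConn sq ({t} : Set V) := by
  rintro A B hUn hDis ⟨a, ha⟩ ⟨b, hb⟩
  have haS : a ∈ ({t} : Set V) := hUn ▸ Or.inl ha
  have hbS : b ∈ ({t} : Set V) := hUn ▸ Or.inr hb
  rw [Set.mem_singleton_iff] at haS hbS
  subst haS; subst hbS
  exact absurd ha (Set.disjoint_right.1 hDis hb)

lemma conn_pair {sq : V → V → Prop} (hs : ∀ a b, sq a b → sq b a) {s t : V} (h : sq s t) :
    IsConn sq ({s, t} : Set V) := by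
  rintro A B hUn hDis ⟨a, ha⟩ ⟨b, hb⟩
  have haS : a ∈ ({s, t} : Set V) := hUn ▸ Or.inl ha
  have hbS : b ∈ ({s, t} : Set V) := hUn ▸ Or.inr hb
  have hab : a ≠ b := fun he => Set.disjoint_left.1 hDis ha (he ▸ hb)
  refine ⟨a, ha, b, hb, ?_⟩
  rcases haS with rfl | rfl <;> rcases hbS with rfl | rfl
  · exact absurd rfl hab
  · exact h
  · exact hs _ _ h
  · exact absurd rfl hab

end St11
end Aux
namespace St11
open List Relation

variable {T : Type*}

lemma tri_free {sqT : T → T → Prop} (hTs : ∀ a b, sqT a b → sqT b a)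
    (hT : (simpleOf sqT hTs).IsAcyclic) {a b c : T}
    (hab : a ≠ b) (hac : a ≠ c) (hbc : b ≠ c)
    (h1 : sqT a b) (h2 : sqT a c) (h3 : sqT b c) : False := by
  have pu := (SimpleGraph.isAcyclic_iff_path_unique).1 hT
  have adj_ab : (simpleOf sqT hTs).Adj a b := ⟨hab, h1⟩
  have adj_ac : (simpleOf sqT hTs).Adj a c := ⟨hac, h2⟩
  have adj_cb : (simpleOf sqT hTs).Adj c b := ⟨Ne.symm hbc, hTs _ _ h3⟩
  have hw2 : (SimpleGraph.Walk.cons adj_ac (SimpleGraph.Walk.cons adj_cb .nil)).IsPath := by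
    rw [SimpleGraph.Walk.isPath_def]
    simp [hab, hac, Ne.symm hbc]
  have heq := pu (SimpleGraph.Path.singleton adj_ab) ⟨_, hw2⟩
  have hlen := congrArg (fun p : (simpleOf sqT hTs).Path a b =>
    (p : (simpleOf sqT hTs).Walk a b).length) heq
  simp [SimpleGraph.Path.singleton] at hlen

lemma rch_walk {sqT : T → T → Prop} (hTs : ∀ a b, sqT a b → sqT b a) {S : Set T} {t t' : T}
    (h : rch sqT S t t') :
    ∃ w : (simpleOf sqT hTs).Walk t t',
      ∀ e ∈ w.edges, ∃ u v, u ∈ S ∧ v ∈ S ∧ e = s(u, v) := by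
  induction h with
  | refl => exact ⟨.nil, by simp⟩
  | @tail b c _ step ih =>
    classical
    obtain ⟨w, hw⟩ := ih
    obtain ⟨hbS, hcS, hbc⟩ := step
    by_cases hq : b = c
    · exact hq ▸ ⟨w, hw⟩
    · refine ⟨w.concat (show (simpleOf sqT hTs).Adj b c from ⟨hq, hbc⟩), ?_⟩
      intro e he
      rw [SimpleGraph.Walk.edges_concat, List.concat_eq_append, List.mem_append] at he
      rcases he with he | he
      · exact hw e he
      · exact ⟨_, _, hbS, hcS, by simpa using he⟩

lemma uel {sqT : T → T → Prop} (hTs : ∀ a b, sqT a b → sqT b a)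
    (hT : (simpleOf sqT hTs).IsAcyclic)
    {Cs Es : Set T} (hdis : ∀ x, x ∈ Cs → x ∈ Es → False)
    {c1 c2 d1 d2 : T} (hc1 : c1 ∈ Cs) (hc2 : c2 ∈ Cs) (hd1 : d1 ∈ Es) (hd2 : d2 ∈ Es)
    (e1 : sqT c1 d1) (e2 : sqT c2 d2)
    (hC : rch sqT Cs c2 c1) (hE : rch sqT Es d1 d2) :
    c1 = c2 ∧ d1 = d2 := by
  classical
  have pu := (SimpleGraph.isAcyclic_iff_path_unique).1 hT
  have hne1 : d1 ≠ c1 := fun h => hdis c1 hc1 (h ▸ hd1)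
  have adj1 : (simpleOf sqT hTs).Adj d1 c1 := ⟨hne1, hTs _ _ e1⟩
  have hne2 : d2 ≠ c2 := fun h => hdis c2 hc2 (h ▸ hd2)
  have adj2 : (simpleOf sqT hTs).Adj d2 c2 := ⟨hne2, hTs _ _ e2⟩
  obtain ⟨w1, hw1⟩ := rch_walk hTs hE
  obtain ⟨w2, hw2⟩ := rch_walk hTs hC
  have hmem : s(d1, c1) ∈ (w1.append (SimpleGraph.Walk.cons adj2 w2)).edges := by
    have h1 : (w1.append (SimpleGraph.Walk.cons adj2 w2)).toPath =
        SimpleGraph.Path.singleton adj1 := pu _ _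
    have h2 : s(d1, c1) ∈ ((w1.append (SimpleGraph.Walk.cons adj2 w2)).toPath :
        (simpleOf sqT hTs).Walk d1 c1).edges := by
      rw [h1]; simp [SimpleGraph.Path.singleton]
    exact SimpleGraph.Walk.edges_toPath_subset _ h2
  rw [SimpleGraph.Walk.edges_append, List.mem_append, SimpleGraph.Walk.edges_cons,
    List.mem_cons] at hmem
  rcases hmem with he | he | he
  · obtain ⟨u, v, huE, hvE, heq⟩ := hw1 _ he
    rcases Sym2.eq_iff.1 heq with ⟨rfl, rfl⟩ | ⟨rfl, rfl⟩
    · exact (hdis c1 hc1 hvE).elim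
    · exact (hdis c1 hc1 huE).elim
  · rcases Sym2.eq_iff.1 he with ⟨rfl, rfl⟩ | ⟨rfl, rfl⟩
    · exact ⟨rfl, rfl⟩
    · exact (hdis d1 hc2 hd1).elim
  · obtain ⟨u, v, huC, hvC, heq⟩ := hw2 _ he
    rcases Sym2.eq_iff.1 heq with ⟨rfl, rfl⟩ | ⟨rfl, rfl⟩
    · exact (hdis d1 huC hd1).elim
    · exact (hdis d1 hvC hd1).elim

end St11
namespace St11
open List Relation

variable {G : Type*}

lemma chain_cons_iff {r : G → G → Prop} {a b : G} {l : List G} :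
    List.Chain r a (b :: l) ↔ r a b ∧ List.Chain r b l := List.isChain_cons_cons

lemma chain_split_iff {r : G → G → Prop} {a c : G} {l₁ l₂ : List G} :
    List.Chain r a (l₁ ++ c :: l₂) ↔ List.Chain r a (l₁ ++ [c]) ∧ List.Chain r c l₂ :=
  List.isChain_cons_split

lemma getLast_eq_of_eq {l m : List G} (h : l = m) (hl : l ≠ []) :
    l.getLast hl = m.getLast (h ▸ hl) := by subst h; rfl

lemma chain_concat' {r : G → G → Prop} :
    ∀ (l : List G) (a b : G), List.Chain r a l →
      r ((a :: l).getLast (by simp)) b → List.Chain r a (l ++ [b])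
  | [], a, b, _, h => List.Chain.cons (by simpa using h) .nil
  | x :: l, a, b, hch, h => by
    rw [chain_cons_iff] at hch
    exact chain_cons_iff.2 ⟨hch.1, chain_concat' l x b hch.2 (by simpa [List.getLast] using h)⟩

lemma chain_last_rel {r : G → G → Prop} :
    ∀ (l : List G) (a b : G), List.Chain r a (l ++ [b]) → r ((a :: l).getLast (by simp)) b
  | [], a, b, hch => by simpa using (chain_cons_iff.1 hch).1
  | x :: l, a, b, hch => by
    rw [List.cons_append, chain_cons_iff] at hch
    simpa [List.getLast] using chain_last_rel l x b hch.2

lemma chain_prefix {r : G → G → Prop} :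
    ∀ (l1 l2 : List G) (a : G), List.Chain r a (l1 ++ l2) → List.Chain r a l1
  | [], _, _, _ => .nil
  | x :: l1, l2, a, hch => by
    rw [List.cons_append, chain_cons_iff] at hch
    exact chain_cons_iff.2 ⟨hch.1, chain_prefix l1 l2 x hch.2⟩

lemma rch_to_chain {sqG : G → G → Prop} {Q : Set G} {a b : G} (h : rch sqG Q a b) :
    ∃ l : List G, List.Chain sqG a l ∧ (∀ x ∈ l, x ∈ Q) ∧ (a :: l).getLast (by simp) = b := by
  induction h with
  | refl => exact ⟨[], .nil, by simp, rfl⟩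
  | @tail p q _ step ih =>
    obtain ⟨l, hch, hQ, hlast⟩ := ih
    refine ⟨l ++ [q], chain_concat' l a q hch (hlast ▸ step.2.2), ?_, ?_⟩
    · intro x hx
      rcases List.mem_append.1 hx with hx | hx
      · exact hQ x hx
      · simp at hx; exact hx ▸ step.2.1
    · exact (getLast_eq_of_eq (show a :: (l ++ [q]) = (a :: l) ++ [q] by simp) (by simp)).trans
        List.getLast_concat

lemma chain_to_rch {sqG : G → G → Prop} {P : Set G} :
    ∀ (l : List G) (a : G), List.Chain sqG a l → (∀ x ∈ a :: l, x ∈ P) →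
      rch sqG P a ((a :: l).getLast (by simp))
  | [], a, _, _ => Relation.ReflTransGen.refl
  | x :: l, a, hch, hP => by
    rw [chain_cons_iff] at hch
    have h2 := chain_to_rch l x hch.2 (fun y hy => hP y (List.mem_cons_of_mem _ hy))
    have h1 : rch sqG P a x :=
      Relation.ReflTransGen.single ⟨hP a (by simp), hP x (by simp), hch.1⟩
    simpa [List.getLast] using (show rch sqG P a _ from h1.trans h2)

lemma split_first {P : Set G} :
    ∀ l : List G, (∃ y ∈ l, y ∈ P) →
      ∃ l1 c l2, l = l1 ++ c :: l2 ∧ (∀ x ∈ l1, x ∉ P) ∧ c ∈ P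
  | [], h => by simp at h
  | x :: l, h => by
    classical
    by_cases hx : x ∈ P
    · exact ⟨[], x, l, rfl, by simp, hx⟩
    · obtain ⟨y, hy, hyP⟩ := h
      rcases List.mem_cons.1 hy with rfl | hy
      · exact absurd hyP hx
      · obtain ⟨l1, c, l2, heq, hl1, hcP⟩ := split_first l ⟨y, hy, hyP⟩
        exact ⟨x :: l1, c, l2, by rw [heq]; rfl, by
          intro z hz
          rcases List.mem_cons.1 hz with rfl | hz
          exacts [hx, hl1 z hz], hcP⟩

lemma surgery {sqG : G → G → Prop} {P Q : Set G} (hPQ : P ⊆ Q)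
    (hD : ∀ a b (l : List G), l ≠ [] → a ∈ P → b ∈ P → (∀ x ∈ l, x ∈ Q ∧ x ∉ P) →
      List.Chain sqG a (l ++ [b]) → a = b) :
    ∀ (n : ℕ) (l : List G), l.length ≤ n → ∀ a, List.Chain sqG a l → (∀ x ∈ l, x ∈ Q) →
      a ∈ P → (a :: l).getLast (by simp) ∈ P → rch sqG P a ((a :: l).getLast (by simp)) := by
  intro n
  induction n with
  | zero =>
    intro l hlen a _ _ _ _
    rw [List.length_eq_zero_iff.1 (Nat.le_zero.1 hlen)]
    exact Relation.ReflTransGen.refl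
  | succ n ih =>
    classical
    intro l hlen a hch hQ haP hlP
    match l, hch with
    | [], _ => exact Relation.ReflTransGen.refl
    | x :: l', hch =>
      rw [chain_cons_iff] at hch
      have hlast : (a :: x :: l').getLast (by simp) = (x :: l').getLast (by simp) :=
        List.getLast_cons (by simp)
      rw [hlast] at hlP ⊢
      by_cases hxP : x ∈ P
      · have step : rch sqG P a x := Relation.ReflTransGen.single ⟨haP, hxP, hch.1⟩
        exact step.trans (ih l' (by simpa using hlen) x hch.2
          (fun y hy => hQ y (List.mem_cons_of_mem _ hy)) hxP hlP)
      · obtain ⟨l1, c, l2, heq, hl1, hcP⟩ :=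
          split_first (P := P) (x :: l') ⟨(x :: l').getLast (by simp), List.getLast_mem _, hlP⟩
        have hl1ne : l1 ≠ [] := by
          rintro rfl
          rw [List.nil_append] at heq
          injection heq with h1 _
          exact hxP (h1 ▸ hcP)
        have hchsplit : List.Chain sqG a (l1 ++ [c]) ∧ List.Chain sqG c l2 := by
          rw [← chain_split_iff, ← heq]
          exact chain_cons_iff.2 hch
        have hac : a = c := by
          refine hD a c l1 hl1ne haP hcP ?_ hchsplit.1
          intro z hz
          have hzl : z ∈ x :: l' := heq ▸ List.mem_append_left _ hz
          exact ⟨hQ z hzl, hl1 z hz⟩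
        have hlen2 : l2.length ≤ n := by
          have h1 := congrArg List.length heq
          have h2 : 0 < l1.length := List.length_pos_iff.2 hl1ne
          have h3 : l'.length + 1 ≤ n + 1 := by simpa using hlen
          simp at h1
          omega
        have hlast2 : (x :: l').getLast (by simp) = (c :: l2).getLast (by simp) := by
          refine (getLast_eq_of_eq heq _).trans ?_
          exact List.getLast_append_of_right_ne_nil _ _ (by simp)
        rw [hlast2] at hlP ⊢
        rw [hac]
        exact ih l2 hlen2 c hchsplit.2
          (fun y hy => hQ y (heq ▸ List.mem_append_right _ (List.mem_cons_of_mem _ hy)))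
          hcP hlP

end St11
namespace St11
open List Relation

variable {T G : Type*} {sqT : T → T → Prop} {sqG : G → G → Prop} {R : T → G → Prop}

lemma cross_pair (hTs : ∀ a b, sqT a b → sqT b a) (hTacyc : (simpleOf sqT hTs).IsAcyclic)
    (hGr : ∀ g, sqG g g) (hGs : ∀ a b, sqG a b → sqG b a) (hep : EdgePreserving sqG sqT R)
    {g g' : G} {s t u : T} (hgg' : sqG g g') (hs : R s g) (ht : R t g) (hst : s ≠ t)
    (hu : R u g') : u = s ∨ u = t := by
  by_contra hcon
  push_neg at hcon
  have h1 : sqT u s := hep u g' g s hu (hGs g g' hgg') hs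
  have h2 : sqT u t := hep u g' g t hu (hGs g g' hgg') ht
  have h3 : sqT s t := hep s g g t hs (hGr g) ht
  exact tri_free hTs hTacyc hcon.1 hcon.2 hst h1 h2 h3

lemma fiber_pair (hTs : ∀ a b, sqT a b → sqT b a) (hTacyc : (simpleOf sqT hTs).IsAcyclic)
    (hGr : ∀ g, sqG g g) (hGs : ∀ a b, sqG a b → sqG b a) (hep : EdgePreserving sqG sqT R)
    {g : G} {s t u : T} (hs : R s g) (ht : R t g) (hst : s ≠ t)
    (hu : R u g) : u = s ∨ u = t :=
  cross_pair hTs hTacyc hGr hGs hep (hGr g) hs ht hst hu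

lemma nonsing {g : G} {t : T} (ht : R t g) (hne : {w : T | R w g} ≠ ({t} : Set T)) :
    ∃ w, R w g ∧ w ≠ t := by
  by_contra h
  push_neg at h
  exact hne (Set.eq_singleton_iff_unique_mem.2 ⟨ht, fun w hw => h w hw⟩)

lemma fibers_conn (hGr : ∀ g, sqG g g) (hep : EdgePreserving sqG sqT R) (hco : CoSurjective R) :
    ∀ (l : List G) (x : G), List.Chain sqG x l → ∀ t, R t x →
      ∀ t' ∈ {u : T | ∃ y ∈ x :: l, R u y}, rch sqT {u : T | ∃ y ∈ x :: l, R u y} t t'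
  | [], x, _, t, htx, t', ht' => by
    obtain ⟨y, hy, hRy⟩ := ht'
    simp only [List.mem_singleton] at hy
    rw [hy] at hRy
    exact Relation.ReflTransGen.single
      ⟨⟨x, by simp, htx⟩, ⟨x, by simp, hRy⟩, hep t x x t' htx (hGr x) hRy⟩
  | y :: l, x, hch, t, htx, t', ht' => by
    rw [chain_cons_iff] at hch
    obtain ⟨z, hz, hRz⟩ := ht'
    rcases List.mem_cons.1 hz with hzx | hz
    · rw [hzx] at hRz
      exact Relation.ReflTransGen.single
        ⟨⟨x, by simp, htx⟩, ⟨x, by simp, hRz⟩, hep t x x t' htx (hGr x) hRz⟩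
    · obtain ⟨t1, ht1⟩ := hco y
      have step : rch sqT {u : T | ∃ y' ∈ x :: y :: l, R u y'} t t1 :=
        Relation.ReflTransGen.single
          ⟨⟨x, by simp, htx⟩, ⟨y, by simp, ht1⟩, hep t x y t1 htx hch.1 ht1⟩
      have ih := fibers_conn hGr hep hco l y hch.2 t1 ht1 t' ⟨z, hz, hRz⟩
      exact step.trans (rch_mono
        (fun u hu => by obtain ⟨w, hw, hRw⟩ := hu; exact ⟨w, List.mem_cons_of_mem _ hw, hRw⟩) ih)

lemma const_u (hTs : ∀ a b, sqT a b → sqT b a) (hTacyc : (simpleOf sqT hTs).IsAcyclic)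
    (hGr : ∀ g, sqG g g) (hep : EdgePreserving sqG sqT R) {t u : T} (hut : u ≠ t) :
    ∀ (l : List G) (x : G), List.Chain sqG x l →
      (∀ y ∈ x :: l, R t y ∧ {w : T | R w y} ≠ ({t} : Set T)) → R u x → ∀ y ∈ x :: l, R u y
  | [], _, _, _, hux, y, hy => by
    simp only [List.mem_singleton] at hy; rw [hy]; exact hux
  | z :: l, x, hch, hmid, hux, y, hy => by
    rw [chain_cons_iff] at hch
    have hRtz : R t z := (hmid z (by simp)).1
    obtain ⟨w, hwz, hwt⟩ := nonsing hRtz (hmid z (by simp)).2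
    have huz : R u z := by
      by_cases hw : u = w
      · exact hw ▸ hwz
      · exfalso
        have h1 : sqT u w := hep u x z w hux hch.1 hwz
        have h2 : sqT u t := hep u x z t hux hch.1 hRtz
        have h3 : sqT w t := hep w z z t hwz (hGr z) hRtz
        exact tri_free hTs hTacyc hw hut hwt h1 h2 h3
    rcases List.mem_cons.1 hy with hyx | hy
    · rw [hyx]; exact hux
    · exact const_u hTs hTacyc hGr hep hut l z hch.2
        (fun y' hy' => hmid y' (List.mem_cons_of_mem _ hy')) huz y hy

lemma firstcross {Q : Set G} {p : G → Prop} {a b : G} (h : rch sqG Q a b)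
    (hb : p b) : ¬ p a → ∃ u v, u ∈ Q ∧ v ∈ Q ∧ sqG u v ∧ ¬ p u ∧ p v := by
  classical
  induction h using Relation.ReflTransGen.head_induction_on with
  | refl => exact fun ha => absurd hb ha
  | @head x c step tail ih =>
    intro ha
    by_cases hc : p c
    · exact ⟨x, c, step.1, step.2.1, step.2.2, ha, hc⟩
    · exact ih hc

end St11
namespace St11
open List Relation

variable {T G : Type*} {sqT : T → T → Prop} {sqG : G → G → Prop} {R : T → G → Prop}

lemma detour1 (hTs : ∀ a b, sqT a b → sqT b a) (hTacyc : (simpleOf sqT hTs).IsAcyclic)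
    (hGr : ∀ g, sqG g g) (hGs : ∀ a b, sqG a b → sqG b a)
    (hep : EdgePreserving sqG sqT R) (hco : CoSurjective R) (her : EdgeReflective sqT sqG R)
    {C : Set T} (hC : IsConn sqT C) :
    ∀ (a b : G) (l : List G), l ≠ [] → a ∈ Preim R C → b ∈ Preim R C →
      (∀ x ∈ l, x ∉ Preim R C) → List.Chain sqG a (l ++ [b]) → a = b := by
  rintro a b (_ | ⟨x1, lt⟩) hlne haP hbP hmid hch
  · exact absurd rfl hlne
  obtain ⟨c1, hc1C, hc1a⟩ := haP
  obtain ⟨c2, hc2C, hc2b⟩ := hbP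
  obtain ⟨d1, hd1x1⟩ := hco x1
  have hkb : sqG ((x1 :: lt).getLast (by simp)) b := by
    have h := chain_last_rel (x1 :: lt) a b hch
    rwa [List.getLast_cons_cons] at h
  rw [List.cons_append, chain_cons_iff] at hch
  have hax1 : sqG a x1 := hch.1
  set xk := (x1 :: lt).getLast (by simp) with hxkdef
  have hxkmem : xk ∈ x1 :: lt := List.getLast_mem _
  obtain ⟨d2, hd2xk⟩ := hco xk
  have crossT1 : sqT c1 d1 := hep c1 a x1 d1 hc1a hax1 hd1x1
  have crossT2 : sqT c2 d2 := hep c2 b xk d2 hc2b (hGs xk b hkb) hd2xk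
  have hdis : ∀ u, u ∈ C → u ∈ {u : T | ∃ y ∈ x1 :: lt, R u y} → False := by
    rintro u huC ⟨y, hy, hRuy⟩
    exact hmid y hy ⟨u, huC, hRuy⟩
  have hd1E : d1 ∈ {u : T | ∃ y ∈ x1 :: lt, R u y} := ⟨x1, by simp, hd1x1⟩
  have hd2E : d2 ∈ {u : T | ∃ y ∈ x1 :: lt, R u y} := ⟨xk, hxkmem, hd2xk⟩
  have hEconn : rch sqT {u : T | ∃ y ∈ x1 :: lt, R u y} d1 d2 :=
    fibers_conn hGr hep hco lt x1 (chain_prefix lt [b] x1 hch.2) d1 hd1x1 d2 hd2E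
  have hCreach : rch sqT C c2 c1 := conn_rch hC hc2C hc1C
  obtain ⟨hceq, hdeq⟩ := uel hTs hTacyc hdis hc1C hc2C hd1E hd2E crossT1 crossT2 hCreach hEconn
  have hFx1 : {u : T | R u x1} = ({d1} : Set T) := by
    apply Set.eq_singleton_iff_unique_mem.2
    refine ⟨hd1x1, fun d' hd' => ?_⟩
    by_contra hne
    have h1 : sqT c1 d' := hep c1 a x1 d' hc1a hax1 hd'
    have h2 : sqT d1 d' := hep d1 x1 x1 d' hd1x1 (hGr x1) hd'
    have hcd1 : c1 ≠ d1 := fun h => hdis c1 hc1C (h ▸ hd1E)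
    have hcd' : c1 ≠ d' := fun h => hmid x1 (by simp) ⟨c1, hc1C, h ▸ hd'⟩
    exact tri_free hTs hTacyc hcd1 hcd' (fun h => hne h.symm) crossT1 h1 h2
  have hFxk : {u : T | R u xk} = ({d2} : Set T) := by
    apply Set.eq_singleton_iff_unique_mem.2
    refine ⟨hd2xk, fun d' hd' => ?_⟩
    by_contra hne
    have h1 : sqT c2 d' := hep c2 b xk d' hc2b (hGs xk b hkb) hd'
    have h2 : sqT d2 d' := hep d2 xk xk d' hd2xk (hGr xk) hd'
    have hcd2 : c2 ≠ d2 := fun h => hdis c2 hc2C (h ▸ hd2E)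
    have hcd' : c2 ≠ d' := fun h => hmid xk hxkmem ⟨c2, hc2C, h ▸ hd'⟩
    exact tri_free hTs hTacyc hcd2 hcd' (fun h => hne h.symm) crossT2 h1 h2
  have hdc_ne : d1 ≠ c1 := fun h => hdis c1 hc1C (h ▸ hd1E)
  obtain ⟨b0, b0', hfb0, hRb0', hsqb, huniq⟩ := her d1 c1 hdc_ne (hTs c1 d1 crossT1)
  have h1 := huniq x1 a hFx1 hc1a (hGs a x1 hax1)
  have h2 := huniq xk b (by rw [hFxk, ← hdeq]) (by rw [hceq]; exact hc2b) hkb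
  exact h1.2.trans h2.2.symm

lemma detour2 (hTs : ∀ a b, sqT a b → sqT b a) (hTacyc : (simpleOf sqT hTs).IsAcyclic)
    (hGr : ∀ g, sqG g g) (hGs : ∀ a b, sqG a b → sqG b a)
    (hep : EdgePreserving sqG sqT R) (her : EdgeReflective sqT sqG R) {t : T} :
    ∀ (a b : G) (l : List G), l ≠ [] → {u : T | R u a} = ({t} : Set T) →
      {u : T | R u b} = ({t} : Set T) →
      (∀ x ∈ l, R t x ∧ {u : T | R u x} ≠ ({t} : Set T)) →
      List.Chain sqG a (l ++ [b]) → a = b := by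
  rintro a b (_ | ⟨x1, lt⟩) hlne hFa hFb hmid hch
  · exact absurd rfl hlne
  have hkb : sqG ((x1 :: lt).getLast (by simp)) b := by
    have h := chain_last_rel (x1 :: lt) a b hch
    rwa [List.getLast_cons_cons] at h
  rw [List.cons_append, chain_cons_iff] at hch
  have hax1 : sqG a x1 := hch.1
  set xk := (x1 :: lt).getLast (by simp) with hxkdef
  have hxkmem : xk ∈ x1 :: lt := List.getLast_mem _
  obtain ⟨u1, hu1x1, hu1t⟩ := nonsing (hmid x1 (by simp)).1 (hmid x1 (by simp)).2
  have hall : ∀ y ∈ x1 :: lt, R u1 y :=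
    const_u hTs hTacyc hGr hep hu1t lt x1 (chain_prefix lt [b] x1 hch.2) hmid hu1x1
  have hsqtu : sqT t u1 := hep t x1 x1 u1 (hmid x1 (by simp)).1 (hGr x1) hu1x1
  obtain ⟨b0, b0', hfb0, hRb0', hsqb, huniq⟩ := her t u1 (Ne.symm hu1t) hsqtu
  have h1 := huniq a x1 hFa hu1x1 hax1
  have h2 := huniq b xk hFb (hall xk hxkmem) (hGs xk b hkb)
  exact h1.1.trans h2.1.symm

lemma edge_fiber_singleton (hTs : ∀ a b, sqT a b → sqT b a)
    (hTacyc : (simpleOf sqT hTs).IsAcyclic)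
    (hGr : ∀ g, sqG g g) (hGs : ∀ a b, sqG a b → sqG b a) (hep : EdgePreserving sqG sqT R)
    {s t : T} (hst : s ≠ t) {g x : G}
    (hFg : {u : T | R u g} = ({s, t} : Set T)) (hsx : R s x)
    (hFx : {u : T | R u x} ≠ ({s, t} : Set T)) (hgx : sqG g x) :
    {u : T | R u x} = ({s} : Set T) := by
  have hsg : R s g := by
    have h : s ∈ {u : T | R u g} := by rw [hFg]; exact Or.inl rfl
    exact h
  have htg : R t g := by
    have h : t ∈ {u : T | R u g} := by rw [hFg]; exact Or.inr rfl
    exact h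
  apply Set.eq_singleton_iff_unique_mem.2
  refine ⟨hsx, fun w hw => ?_⟩
  rcases cross_pair hTs hTacyc hGr hGs hep hgx hsg htg hst hw with rfl | hwt
  · rfl
  · exfalso
    apply hFx
    apply Set.Subset.antisymm
    · intro v hv
      rcases fiber_pair hTs hTacyc hGr hGs hep hsx (hwt ▸ hw) hst hv with rfl | rfl
      · exact Or.inl rfl
      · exact Or.inr rfl
    · rintro v (rfl | rfl)
      · exact hsx
      · exact hwt ▸ hw

lemma detour3a (hTs : ∀ a b, sqT a b → sqT b a) (hTacyc : (simpleOf sqT hTs).IsAcyclic)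
    (hGr : ∀ g, sqG g g) (hGs : ∀ a b, sqG a b → sqG b a)
    (hep : EdgePreserving sqG sqT R) (her : EdgeReflective sqT sqG R)
    {s t : T} (hst : s ≠ t) (hsqst : sqT s t) :
    ∀ (a b : G) (l : List G), l ≠ [] → {u : T | R u a} = ({s, t} : Set T) →
      {u : T | R u b} = ({s, t} : Set T) →
      (∀ x ∈ l, R s x ∧ {u : T | R u x} ≠ ({s, t} : Set T)) →
      List.Chain sqG a (l ++ [b]) → a = b := by
  rintro a b (_ | ⟨x1, lt⟩) hlne hFa hFb hmid hch
  · exact absurd rfl hlne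
  have hkb : sqG ((x1 :: lt).getLast (by simp)) b := by
    have h := chain_last_rel (x1 :: lt) a b hch
    rwa [List.getLast_cons_cons] at h
  rw [List.cons_append, chain_cons_iff] at hch
  have hax1 : sqG a x1 := hch.1
  set xk := (x1 :: lt).getLast (by simp) with hxkdef
  have hxkmem : xk ∈ x1 :: lt := List.getLast_mem _
  have hFx1 : {u : T | R u x1} = ({s} : Set T) :=
    edge_fiber_singleton hTs hTacyc hGr hGs hep hst hFa (hmid x1 (by simp)).1
      (hmid x1 (by simp)).2 hax1
  have hFxk : {u : T | R u xk} = ({s} : Set T) :=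
    edge_fiber_singleton hTs hTacyc hGr hGs hep hst hFb (hmid xk hxkmem).1
      (hmid xk hxkmem).2 (hGs xk b hkb)
  have hta : R t a := by
    have h : t ∈ {u : T | R u a} := by rw [hFa]; exact Or.inr rfl
    exact h
  have htb : R t b := by
    have h : t ∈ {u : T | R u b} := by rw [hFb]; exact Or.inr rfl
    exact h
  obtain ⟨b0, b0', hfb0, hRb0', hsqb, huniq⟩ := her s t hst hsqst
  have h1 := huniq x1 a hFx1 hta (hGs a x1 hax1)
  have h2 := huniq xk b hFxk htb hkb
  exact h1.2.trans h2.2.symm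

end St11
namespace St11
open List Relation

variable {T G : Type*} {sqT : T → T → Prop} {sqG : G → G → Prop} {R : T → G → Prop}

lemma part1 (hTs : ∀ a b, sqT a b → sqT b a) (hTacyc : (simpleOf sqT hTs).IsAcyclic)
    (hGr : ∀ g, sqG g g) (hGs : ∀ a b, sqG a b → sqG b a) (hGconn : IsConn sqG Set.univ)
    (hep : EdgePreserving sqG sqT R) (hco : CoSurjective R) (her : EdgeReflective sqT sqG R)
    (C : Set T) (hC : IsConn sqT C) : IsConn sqG (Preim R C) := by
  apply rch_conn
  intro g hg g' hg'
  obtain ⟨l, hch, _, hlast⟩ :=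
    rch_to_chain (conn_rch hGconn (Set.mem_univ g) (Set.mem_univ g'))
  have hs := surgery (P := Preim R C) (Q := Set.univ) (Set.subset_univ _)
    (fun a b l hl haP hbP hmid hch => detour1 hTs hTacyc hGr hGs hep hco her hC a b l hl haP hbP
      (fun x hx => (hmid x hx).2) hch)
    l.length l le_rfl g hch (fun x _ => Set.mem_univ x) hg (by rw [hlast]; exact hg')
  rw [← hlast]
  exact hs

lemma part2 (hTs : ∀ a b, sqT a b → sqT b a) (hTacyc : (simpleOf sqT hTs).IsAcyclic)
    (hGr : ∀ g, sqG g g) (hGs : ∀ a b, sqG a b → sqG b a) (hGconn : IsConn sqG Set.univ)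
    (hep : EdgePreserving sqG sqT R) (hco : CoSurjective R) (her : EdgeReflective sqT sqG R)
    (t : T) : IsConn sqG {g : G | {u : T | R u g} = ({t} : Set T)} := by
  apply rch_conn
  intro g hg g' hg'
  have hgQ : g ∈ Preim R ({t} : Set T) := ⟨t, rfl, by
    have h : t ∈ {u : T | R u g} := by rw [hg]; rfl
    exact h⟩
  have hg'Q : g' ∈ Preim R ({t} : Set T) := ⟨t, rfl, by
    have h : t ∈ {u : T | R u g'} := by rw [hg']; rfl
    exact h⟩
  have hQconn : IsConn sqG (Preim R ({t} : Set T)) :=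
    part1 hTs hTacyc hGr hGs hGconn hep hco her _ (conn_single t)
  obtain ⟨l, hch, hQ, hlast⟩ := rch_to_chain (conn_rch hQconn hgQ hg'Q)
  have hPQ : {g : G | {u : T | R u g} = ({t} : Set T)} ⊆ Preim R ({t} : Set T) := by
    intro x hx
    exact ⟨t, rfl, by
      have h : t ∈ {u : T | R u x} := by rw [hx]; rfl
      exact h⟩
  have hs := surgery (P := {g : G | {u : T | R u g} = ({t} : Set T)})
    (Q := Preim R ({t} : Set T)) hPQ
    (fun a b l hl haP hbP hmid hch => detour2 hTs hTacyc hGr hGs hep her a b l hl haP hbP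
      (fun x hx => by
        obtain ⟨hxQ, hxP⟩ := hmid x hx
        obtain ⟨u, hu, hRux⟩ := hxQ
        rw [Set.mem_singleton_iff] at hu
        exact ⟨hu ▸ hRux, hxP⟩) hch)
    l.length l le_rfl g hch hQ hg (by rw [hlast]; exact hg')
  rw [← hlast]
  exact hs

lemma part3a (hTs : ∀ a b, sqT a b → sqT b a) (hTacyc : (simpleOf sqT hTs).IsAcyclic)
    (hGr : ∀ g, sqG g g) (hGs : ∀ a b, sqG a b → sqG b a) (hGconn : IsConn sqG Set.univ)
    (hep : EdgePreserving sqG sqT R) (hco : CoSurjective R) (her : EdgeReflective sqT sqG R)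
    {s t : T} (hst : s ≠ t) (hsqst : sqT s t) :
    IsConn sqG {g : G | {u : T | R u g} = ({s, t} : Set T)} := by
  apply rch_conn
  intro g hg g' hg'
  have hmem : ∀ x : G, {u : T | R u x} = ({s, t} : Set T) → x ∈ Preim R ({s} : Set T) := by
    intro x hx
    exact ⟨s, rfl, by
      have h : s ∈ {u : T | R u x} := by rw [hx]; exact Or.inl rfl
      exact h⟩
  have hQconn : IsConn sqG (Preim R ({s} : Set T)) :=
    part1 hTs hTacyc hGr hGs hGconn hep hco her _ (conn_single s)
  obtain ⟨l, hch, hQ, hlast⟩ := rch_to_chain (conn_rch hQconn (hmem g hg) (hmem g' hg'))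
  have hs := surgery (P := {g : G | {u : T | R u g} = ({s, t} : Set T)})
    (Q := Preim R ({s} : Set T)) hmem
    (fun a b l hl haP hbP hmid hch => detour3a hTs hTacyc hGr hGs hep her hst hsqst a b l hl
      haP hbP
      (fun x hx => by
        obtain ⟨hxQ, hxP⟩ := hmid x hx
        obtain ⟨u, hu, hRux⟩ := hxQ
        rw [Set.mem_singleton_iff] at hu
        exact ⟨hu ▸ hRux, hxP⟩) hch)
    l.length l le_rfl g hch hQ hg (by rw [hlast]; exact hg')
  rw [← hlast]
  exact hs

end St11
namespace St11
open List Relation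

variable {T G : Type*} {sqT : T → T → Prop} {sqG : G → G → Prop} {R : T → G → Prop}

lemma part3b (hTs : ∀ a b, sqT a b → sqT b a) (hTacyc : (simpleOf sqT hTs).IsAcyclic)
    (hGr : ∀ g, sqG g g) (hGs : ∀ a b, sqG a b → sqG b a) (hGconn : IsConn sqG Set.univ)
    (hep : EdgePreserving sqG sqT R) (hco : CoSurjective R) (her : EdgeReflective sqT sqG R)
    {s t : T} (hst : s ≠ t) (hsqst : sqT s t) :
    IsConn sqG {x : G | ∃ f g, sqG f g ∧ {u : T | R u f ∨ R u g} = ({s, t} : Set T) ∧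
      (x = f ∨ x = g)} := by
  classical
  set X := {x : G | ∃ f g, sqG f g ∧ {u : T | R u f ∨ R u g} = ({s, t} : Set T) ∧
      (x = f ∨ x = g)} with hXdef
  -- membership of strict edge preimage elements
  have hSX : ∀ z : G, {u : T | R u z} = ({s, t} : Set T) → z ∈ X := by
    intro z hz
    refine ⟨z, z, hGr z, ?_, Or.inl rfl⟩
    ext u
    simp only [Set.mem_setOf_eq, or_self]
    exact Set.ext_iff.1 hz u
  -- partner
  have hpartner : ∀ x ∈ X, ∃ p, sqG x p ∧ {u : T | R u x ∨ R u p} = ({s, t} : Set T) := by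
    rintro x ⟨f, g, hfg, huni, hx⟩
    rcases hx with hx | hx
    · rw [hx]
      exact ⟨g, hfg, huni⟩
    · rw [hx]
      refine ⟨f, hGs f g hfg, ?_⟩
      rw [← huni]
      ext u
      exact or_comm
  have hsub : ∀ x ∈ X, ∀ u, R u x → u = s ∨ u = t := by
    intro x hx u hu
    obtain ⟨p, _, hup⟩ := hpartner x hx
    have h : u ∈ ({s, t} : Set T) := by rw [← hup]; exact Or.inl hu
    exact h
  have classify : ∀ x ∈ X, {u : T | R u x} = ({s} : Set T) ∨
      {u : T | R u x} = ({t} : Set T) ∨ {u : T | R u x} = ({s, t} : Set T) := by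
    intro x hx
    by_cases hsx : R s x <;> by_cases htx : R t x
    · refine Or.inr (Or.inr (Set.Subset.antisymm ?_ ?_))
      · intro u hu
        rcases hsub x hx u hu with rfl | rfl
        exacts [Or.inl rfl, Or.inr rfl]
      · rintro u (rfl | rfl); exacts [hsx, htx]
    · exact Or.inl (Set.eq_singleton_iff_unique_mem.2 ⟨hsx, fun u hu =>
        (hsub x hx u hu).resolve_right (fun e => htx (e ▸ hu))⟩)
    · exact Or.inr (Or.inl (Set.eq_singleton_iff_unique_mem.2 ⟨htx, fun u hu =>
        (hsub x hx u hu).resolve_left (fun e => hsx (e ▸ hu))⟩))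
    · exfalso
      obtain ⟨w, hwx⟩ := hco x
      rcases hsub x hx w hwx with rfl | rfl
      exacts [hsx hwx, htx hwx]
  obtain ⟨b0, b0', hfb0, hRb0', hsqb, huniq⟩ := her s t hst hsqst
  obtain ⟨c0, c0', hfc0, hRc0', hsqc, huniqc⟩ := her t s (Ne.symm hst) (hTs s t hsqst)
  have hRsb0 : R s b0 := by
    have h : s ∈ {x : T | R x b0} := by rw [hfb0]; rfl
    exact h
  have hRtc0 : R t c0 := by
    have h : t ∈ {x : T | R x c0} := by rw [hfc0]; rfl
    exact h
  -- fibers of b0' and c0' are within {s, t}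
  have hFb0'sub : ∀ u, R u b0' → u = s ∨ u = t := by
    intro u hu
    by_contra hcon
    push_neg at hcon
    have h1 : sqT u s := hep u b0' b0 s hu (hGs b0 b0' hsqb) hRsb0
    have h2 : sqT u t := hep u b0' b0' t hu (hGr b0') hRb0'
    exact tri_free hTs hTacyc hcon.1 hcon.2 hst h1 h2 hsqst
  have hFc0'sub : ∀ u, R u c0' → u = s ∨ u = t := by
    intro u hu
    by_contra hcon
    push_neg at hcon
    have h1 : sqT u s := hep u c0' c0' s hu (hGr c0') hRc0'
    have h2 : sqT u t := hep u c0' c0 t hu (hGs c0 c0' hsqc) hRtc0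
    exact tri_free hTs hTacyc hcon.1 hcon.2 hst h1 h2 hsqst
  have hb0X : b0 ∈ X := by
    refine ⟨b0, b0', hsqb, ?_, Or.inl rfl⟩
    apply Set.Subset.antisymm
    · rintro u (hu | hu)
      · have : u ∈ {x : T | R x b0} := hu
        rw [hfb0] at this
        exact Or.inl this
      · rcases hFb0'sub u hu with rfl | rfl
        exacts [Or.inl rfl, Or.inr rfl]
    · rintro u (rfl | rfl)
      exacts [Or.inl hRsb0, Or.inr hRb0']
  have hc0X : c0 ∈ X := by
    refine ⟨c0, c0', hsqc, ?_, Or.inl rfl⟩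
    apply Set.Subset.antisymm
    · rintro u (hu | hu)
      · have : u ∈ {x : T | R x c0} := hu
        rw [hfc0] at this
        exact Or.inr this
      · rcases hFc0'sub u hu with rfl | rfl
        exacts [Or.inl rfl, Or.inr rfl]
    · rintro u (rfl | rfl)
      exacts [Or.inr hRc0', Or.inl hRtc0]
  have hX_s : ∀ x ∈ X, {u : T | R u x} = ({s} : Set T) → x = b0 := by
    intro x hx hFx
    obtain ⟨p, hxp, hup⟩ := hpartner x hx
    have hRtp : R t p := by
      have ht' : t ∈ {u : T | R u x ∨ R u p} := by rw [hup]; exact Or.inr rfl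
      rcases ht' with h | h
      · exfalso
        have : t ∈ ({s} : Set T) := hFx ▸ h
        exact hst (Set.mem_singleton_iff.1 this).symm
      · exact h
    exact (huniq x p hFx hRtp hxp).1
  have hX_t : ∀ x ∈ X, {u : T | R u x} = ({t} : Set T) → x = c0 := by
    intro x hx hFx
    obtain ⟨p, hxp, hup⟩ := hpartner x hx
    have hRsp : R s p := by
      have hs' : s ∈ {u : T | R u x ∨ R u p} := by rw [hup]; exact Or.inl rfl
      rcases hs' with h | h
      · exfalso
        have : s ∈ ({t} : Set T) := hFx ▸ h
        exact hst (Set.mem_singleton_iff.1 this)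
      · exact h
    exact (huniqc x p hFx hRsp hxp).1
  by_cases hS : ∃ x0 : G, {u : T | R u x0} = ({s, t} : Set T)
  · -- strict edge preimage nonempty
    obtain ⟨x0, hx0⟩ := hS
    have hb0'S : {u : T | R u b0'} = ({s, t} : Set T) := by
      by_cases hsb0' : R s b0'
      · apply Set.Subset.antisymm
        · intro u hu
          rcases hFb0'sub u hu with rfl | rfl
          exacts [Or.inl rfl, Or.inr rfl]
        · rintro u (rfl | rfl)
          exacts [hsb0', hRb0']
      · exfalso
        have hFb0' : {u : T | R u b0'} = ({t} : Set T) :=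
          Set.eq_singleton_iff_unique_mem.2 ⟨hRb0', fun u hu =>
            (hFb0'sub u hu).resolve_left (fun e => hsb0' (e ▸ hu))⟩
        obtain ⟨hb0'c0, hb0c0'⟩ := huniqc b0' b0 hFb0' hRsb0 (hGs b0 b0' hsqb)
        -- walk from b0' to x0 inside Preim R {t}
        have hQconn : IsConn sqG (Preim R ({t} : Set T)) :=
          part1 hTs hTacyc hGr hGs hGconn hep hco her _ (conn_single t)
        have hb0'Q : b0' ∈ Preim R ({t} : Set T) := ⟨t, rfl, hRb0'⟩
        have hx0Q : x0 ∈ Preim R ({t} : Set T) := ⟨t, rfl, by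
          have h : t ∈ {u : T | R u x0} := by rw [hx0]; exact Or.inr rfl
          exact h⟩
        have hrsx0 : R s x0 := by
          have h : s ∈ {u : T | R u x0} := by rw [hx0]; exact Or.inl rfl
          exact h
        obtain ⟨u, v, huQ, hvQ, huv, hnsu, hsv⟩ :=
          firstcross (p := fun x => R s x) (conn_rch hQconn hb0'Q hx0Q) hrsx0 hsb0'
        have hRtu : R t u := by
          obtain ⟨w, hw, hRwu⟩ := huQ
          rw [Set.mem_singleton_iff] at hw
          exact hw ▸ hRwu
        have hRtv : R t v := by
          obtain ⟨w, hw, hRwv⟩ := hvQ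
          rw [Set.mem_singleton_iff] at hw
          exact hw ▸ hRwv
        have hFu : {u' : T | R u' u} = ({t} : Set T) := by
          apply Set.eq_singleton_iff_unique_mem.2
          refine ⟨hRtu, fun w hw => ?_⟩
          rcases cross_pair hTs hTacyc hGr hGs hep (hGs u v huv) hsv hRtv hst hw with rfl | rfl
          · exact absurd hw hnsu
          · rfl
        obtain ⟨huc0, hvc0'⟩ := huniqc u v hFu hsv huv
        -- v = c0' = b0 but R t v and fiber of b0 is {s}

        have hRtb0 : R t b0 := by rw [hb0c0', ← hvc0']; exact hRtv
        have h : t ∈ {x : T | R x b0} := hRtb0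
        rw [hfb0] at h
        exact hst (Set.mem_singleton_iff.1 h).symm
    have hc0'S : {u : T | R u c0'} = ({s, t} : Set T) := by
      by_cases htc0' : R t c0'
      · apply Set.Subset.antisymm
        · intro u hu
          rcases hFc0'sub u hu with rfl | rfl
          exacts [Or.inl rfl, Or.inr rfl]
        · rintro u (rfl | rfl)
          exacts [hRc0', htc0']
      · exfalso
        have hFc0' : {u : T | R u c0'} = ({s} : Set T) :=
          Set.eq_singleton_iff_unique_mem.2 ⟨hRc0', fun u hu =>
            (hFc0'sub u hu).resolve_right (fun e => htc0' (e ▸ hu))⟩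
        obtain ⟨hc0'b0, hc0b0'⟩ := huniq c0' c0 hFc0' hRtc0 (hGs c0 c0' hsqc)
        -- then fiber of c0 = b0' is both {t} and {s,t}
        have h : s ∈ {x : T | R x c0} := by
          rw [hc0b0']
          exact (by rw [hb0'S]; exact Or.inl rfl : s ∈ {u : T | R u b0'})
        rw [hfc0] at h
        exact hst (Set.mem_singleton_iff.1 h)
    -- now connect everything through the strict edge preimage
    have hreachS : ∀ x ∈ X, ∃ z, {u : T | R u z} = ({s, t} : Set T) ∧ rch sqG X x z := by
      intro x hx
      rcases classify x hx with hF | hF | hF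
      · have hxb0 : x = b0 := hX_s x hx hF
        refine ⟨b0', hb0'S, Relation.ReflTransGen.single ⟨hx, hSX b0' hb0'S, ?_⟩⟩
        rw [hxb0]; exact hsqb
      · have hxc0 : x = c0 := hX_t x hx hF
        refine ⟨c0', hc0'S, Relation.ReflTransGen.single ⟨hx, hSX c0' hc0'S, ?_⟩⟩
        rw [hxc0]; exact hsqc
      · exact ⟨x, hF, Relation.ReflTransGen.refl⟩
    apply rch_conn
    intro x hx y hy
    obtain ⟨zx, hzx, hrx⟩ := hreachS x hx
    obtain ⟨zy, hzy, hry⟩ := hreachS y hy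
    have hmid : rch sqG X zx zy := by
      have h3a := part3a hTs hTacyc hGr hGs hGconn hep hco her hst hsqst
      exact rch_mono (fun z hz => hSX z hz) (conn_rch h3a hzx hzy)
    exact (hrx.trans hmid).trans (rch_symm hGs hry)
  · -- strict edge preimage empty : X ⊆ {b0, c0} and b0 ~ c0
    push_neg at hS
    have hFb0' : {u : T | R u b0'} = ({t} : Set T) := by
      have hsb0' : ¬ R s b0' := by
        intro hsb0'
        apply hS b0'
        apply Set.Subset.antisymm
        · intro u hu
          rcases hFb0'sub u hu with rfl | rfl
          exacts [Or.inl rfl, Or.inr rfl]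
        · rintro u (rfl | rfl)
          exacts [hsb0', hRb0']
      exact Set.eq_singleton_iff_unique_mem.2 ⟨hRb0', fun u hu =>
        (hFb0'sub u hu).resolve_left (fun e => hsb0' (e ▸ hu))⟩
    obtain ⟨hb0'c0, hb0c0'⟩ := huniqc b0' b0 hFb0' hRsb0 (hGs b0 b0' hsqb)
    have hsqb0c0 : sqG b0 c0 := by rw [← hb0'c0]; exact hsqb
    have hclass : ∀ x ∈ X, x = b0 ∨ x = c0 := by
      intro x hx
      rcases classify x hx with hF | hF | hF
      · exact Or.inl (hX_s x hx hF)
      · exact Or.inr (hX_t x hx hF)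
      · exact absurd hF (hS x)
    apply rch_conn
    intro x hx y hy
    rcases hclass x hx with hxe | hxe <;> rcases hclass y hy with hye | hye <;>
      rw [hxe, hye]
    exacts [Relation.ReflTransGen.refl,
      Relation.ReflTransGen.single ⟨hb0X, hc0X, hsqb0c0⟩,
      Relation.ReflTransGen.single ⟨hc0X, hb0X, hGs b0 c0 hsqb0c0⟩,
      Relation.ReflTransGen.refl]

end St11

theorem stmt_11 {T G : Type*}
    [Finite T] [Nonempty T] [Finite G] [Nonempty G]
    (sqT : T → T → Prop) (sqG : G → G → Prop)
    (hTr : ∀ t, sqT t t) (hTs : ∀ a b, sqT a b → sqT b a)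
    (hGr : ∀ g, sqG g g) (hGs : ∀ a b, sqG a b → sqG b a)
    (hTconn : IsConn sqT Set.univ) (hTacyc : (simpleOf sqT hTs).IsAcyclic)
    (hGconn : IsConn sqG Set.univ)
    (R : T → G → Prop)
    (hep : EdgePreserving sqG sqT R) (hco : CoSurjective R)
    (her : EdgeReflective sqT sqG R) :
    (∀ C : Set T, IsConn sqT C → IsConn sqG (Preim R C)) ∧
    (∀ t : T, IsConn sqG {g | {u | R u g} = ({t} : Set T)}) ∧
    (∀ s t : T, s ≠ t → sqT s t →
      IsConn sqG {g | {u | R u g} = ({s, t} : Set T)} ∧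
      IsConn sqG {x | ∃ f g, sqG f g ∧ {u | R u f ∨ R u g} = ({s, t} : Set T) ∧
        (x = f ∨ x = g)}) ∧
    RelMonotone sqG sqT R := by
  
  refine ⟨St11.part1 hTs hTacyc hGr hGs hGconn hep hco her,
    St11.part2 hTs hTacyc hGr hGs hGconn hep hco her,
    fun s t hst hsqst =>
      ⟨St11.part3a hTs hTacyc hGr hGs hGconn hep hco her hst hsqst,
       St11.part3b hTs hTacyc hGr hGs hGconn hep hco her hst hsqst⟩,
    fun C hC => St11.part1 hTs hTacyc hGr hGs hGconn hep hco her C hC⟩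
end

section
/- Let G be a triangle-free finite graph, let T be a finite tree, and let ⊐ ⊆ G × T be edge-preserving and co-bijective. If ⊐ is monotone and the strict preimage g_⊐ is connected for every g ∈ G, then ⊐ is edge-reflective. -/
lemma walk_in_conn {V : Type*} (sq : V → V → Prop) (hs : ∀ a b, sq a b → sq b a)
    {C : Set V} (hC : IsConn sq C) {a b : V} (ha : a ∈ C) (hb : b ∈ C) :
    ∃ w : (simpleOf sq hs).Walk a b, ∀ x ∈ w.support, x ∈ C := by
  classical
  set A : Set V := {x | x ∈ C ∧ ∃ w : (simpleOf sq hs).Walk a x, ∀ y ∈ w.support, y ∈ C}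
    with hA
  by_contra hcon
  have hbA : b ∉ A := by
    intro hbA
    exact hcon ⟨hbA.2.choose, hbA.2.choose_spec⟩
  have hAC : A ⊆ C := fun x hx => hx.1
  have haA : a ∈ A := ⟨ha, SimpleGraph.Walk.nil, by simp [ha]⟩
  obtain ⟨x, hx, y, hy, hxy⟩ := hC A (C \ A) (Set.union_diff_cancel hAC)
    Set.disjoint_sdiff_right ⟨a, haA⟩ ⟨b, hb, hbA⟩
  obtain ⟨hxC, w, hw⟩ := hx
  have hne : x ≠ y := fun h => hy.2 (h ▸ ⟨hxC, w, hw⟩)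
  have hyA : y ∈ A := by
    have hadj : (simpleOf sq hs).Adj x y := ⟨hne, hxy⟩
    refine ⟨hy.1, w.concat hadj, ?_⟩
    intro z hz
    rw [SimpleGraph.Walk.support_concat] at hz
    rcases List.mem_append.mp hz with h | h
    · exact hw z h
    · exact (List.mem_singleton.mp h) ▸ hy.1
  exact hy.2 hyA

theorem stmt_12 {G T : Type*}
    [Finite G] [Nonempty G] [Finite T] [Nonempty T]
    (sqG : G → G → Prop) (sqT : T → T → Prop)
    (hGr : ∀ g, sqG g g) (hGs : ∀ a b, sqG a b → sqG b a)
    (hTr : ∀ t, sqT t t) (hTs : ∀ a b, sqT a b → sqT b a)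
    (htf : TriangleFree sqG)
    (hTconn : IsConn sqT Set.univ) (hTacyc : (simpleOf sqT hTs).IsAcyclic)
    (R : G → T → Prop)
    (hep : EdgePreserving sqT sqG R) (hco : CoSurjective R) (hci : CoInjective R)
    (hmono : RelMonotone sqT sqG R)
    (hstrict : ∀ g : G, IsConn sqT {t | {x | R x t} = ({g} : Set G)}) :
    EdgeReflective sqG sqT R := by
  classical
  intro g g' hne hgg'
  -- strict preimage / preimage disjointness
  have hSP : ∀ t : T, {x | R x t} = ({g} : Set G) → ¬ R g' t := by
    intro t ht hR
    have : g' ∈ {x | R x t} := hR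
    rw [ht] at this
    exact hne (this.symm)
  have hRg : ∀ t : T, {x | R x t} = ({g} : Set G) → R g t := by
    intro t ht
    have : g ∈ ({g} : Set G) := rfl
    rw [← ht] at this
    exact this
  -- connectivity of {t | R g' t}
  have hsing : IsConn sqG ({g'} : Set G) := by
    intro A B hUn hDis hA hB
    exfalso
    obtain ⟨x, hx⟩ := hA
    obtain ⟨y, hy⟩ := hB
    have hx' : x ∈ ({g'} : Set G) := hUn ▸ (Set.mem_union_left _ hx)
    have hy' : y ∈ ({g'} : Set G) := hUn ▸ (Set.mem_union_right _ hy)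
    rw [Set.mem_singleton_iff] at hx' hy'
    have hxy : x = y := hx'.trans hy'.symm
    exact (Set.disjoint_left.mp hDis hx) (hxy ▸ hy)
  have hPeq : Preim R ({g'} : Set G) = {t | R g' t} := by
    ext t
    constructor
    · rintro ⟨x, hx, hR⟩
      rw [Set.mem_singleton_iff] at hx
      exact hx ▸ hR
    · intro h; exact ⟨g', rfl, h⟩
  have hPconn : IsConn sqT {t | R g' t} := hPeq ▸ hmono _ hsing
  -- connectivity of the pair preimage
  have hpair : IsConn sqG ({g, g'} : Set G) := by
    intro A B hUn hDis hA hB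
    obtain ⟨x, hx⟩ := hA
    obtain ⟨y, hy⟩ := hB
    have hx' : x ∈ ({g, g'} : Set G) := hUn ▸ (Set.mem_union_left _ hx)
    have hy' : y ∈ ({g, g'} : Set G) := hUn ▸ (Set.mem_union_right _ hy)
    have hxyne : x ≠ y := fun h => Set.disjoint_left.mp hDis hx (h ▸ hy)
    rcases hx' with hx' | hx' <;> rcases hy' with hy' | hy'
    · exact absurd (hx'.trans hy'.symm) hxyne
    · exact ⟨x, hx, y, hy, by rw [hx', hy']; exact hgg'⟩
    · exact ⟨x, hx, y, hy, by rw [hx', hy']; exact hGs _ _ hgg'⟩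
    · exact absurd (hx'.trans hy'.symm) hxyne
  have hWconn : IsConn sqT (Preim R ({g, g'} : Set G)) := hmono _ hpair
  -- nonemptiness
  obtain ⟨t0, ht0⟩ := hci g
  obtain ⟨u0, hu0⟩ := hci g'
  have hu0R : R g' u0 := by
    have : g' ∈ ({g'} : Set G) := rfl
    rw [← hu0] at this
    exact this
  -- apply connectivity of W to the partition
  have hUn : {t | R g' t} ∪ {t | R g t ∧ ¬ R g' t} = Preim R ({g, g'} : Set G) := by
    ext t
    constructor
    · rintro (h | ⟨h, _⟩)
      · exact ⟨g', Or.inr rfl, h⟩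
      · exact ⟨g, Or.inl rfl, h⟩
    · rintro ⟨x, hx | hx, hR⟩
      · by_cases h : R g' t
        · exact Or.inl h
        · exact Or.inr ⟨hx ▸ hR, h⟩
      · exact Or.inl (hx ▸ hR)
  have hDis : Disjoint {t | R g' t} {t | R g t ∧ ¬ R g' t} := by
    rw [Set.disjoint_left]
    intro t ht ht'
    exact ht'.2 ht
  obtain ⟨a, haA, b, hbB, hab⟩ := hWconn _ _ hUn hDis ⟨u0, hu0R⟩
    ⟨t0, hRg t0 ht0, hSP t0 ht0⟩
  have hba : sqT b a := hTs a b hab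
  -- b has strict preimage {g}
  have hbS : {x | R x b} = ({g} : Set G) := by
    ext x
    simp only [Set.mem_setOf_eq, Set.mem_singleton_iff]
    constructor
    · intro hx
      by_contra hxg
      have hxg' : x ≠ g' := fun h => hbB.2 (h ▸ hx)
      exact htf x g g' hxg hne hxg' (hep x b b g hx (hTr b) hbB.1)
        (hep g b a g' hbB.1 hba haA) (hep x b a g' hx hba haA)
    · rintro rfl; exact hbB.1
  refine ⟨b, a, hbS, haA, hba, ?_⟩
  -- uniqueness
  intro c c' hcS hc'R hcc'
  have hadj_ba : (simpleOf sqT hTs).Adj b a :=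
    ⟨fun h => hSP b hbS (h ▸ haA), hba⟩
  have hadj_cc' : (simpleOf sqT hTs).Adj c c' :=
    ⟨fun h => hSP c hcS (h ▸ hc'R), hcc'⟩
  obtain ⟨w1, hw1⟩ := walk_in_conn sqT hTs (hstrict g) (hbS : b ∈ {t | {x | R x t} = ({g} : Set G)}) hcS
  obtain ⟨w2, hw2⟩ := walk_in_conn sqT hTs hPconn (hc'R : c' ∈ {t | R g' t}) (haA : a ∈ {t | R g' t})
  set w : (simpleOf sqT hTs).Walk b a :=
    w1.append (SimpleGraph.Walk.cons hadj_cc' w2) with hw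
  have hpath : w.toPath = SimpleGraph.Path.singleton hadj_ba :=
    hTacyc.path_unique _ _
  have hmem : s(b, a) ∈ w.edges := by
    have h1 : s(b, a) ∈ ((SimpleGraph.Path.singleton hadj_ba : (simpleOf sqT hTs).Path b a) :
        (simpleOf sqT hTs).Walk b a).edges := by
      simp [SimpleGraph.Path.singleton]
    rw [← hpath] at h1
    exact SimpleGraph.Walk.edges_toPath_subset w h1
  rw [hw, SimpleGraph.Walk.edges_append, SimpleGraph.Walk.edges_cons] at hmem
  rcases List.mem_append.mp hmem with h | h
  · exfalso
    have : a ∈ w1.support := SimpleGraph.Walk.snd_mem_support_of_mem_edges w1 h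
    exact hSP a (hw1 a this) haA
  · rcases List.mem_cons.mp h with h | h
    · rcases Sym2.eq_iff.mp h with ⟨h1, h2⟩ | ⟨h1, h2⟩
      · exact ⟨h1.symm, h2.symm⟩
      · exact absurd (h1 ▸ hc'R) (hSP b hbS)
    · exfalso
      have : b ∈ w2.support := SimpleGraph.Walk.fst_mem_support_of_mem_edges w2 h
      exact hSP b hbS (hw2 b this)
end

section
/- Let G be a finite graph. Define the edge-splitting graph H with vertex set G ∪ {s_{g,g'} : g, g' ∈ G adjacent}, where the edge relation of H is reflexive and its only non-loop edges are g ⊓ s_{g,g'}, s_{g,g'} ⊓ s_{g',g} and s_{g',g} ⊓ g' for each pair of adjacent g, g' ∈ G. Define ⊐ ⊆ G × H by: the only element of G above the vertex g ∈ H is g itself, and the elements of G above s_{g,g'} are exactly g and g'. Then ⊐ is edge-preserving, co-bijective, monotone, edge-witnessing and star-refining. -/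
universe u

abbrev SplitVertex (G : Type u) (sq : G → G → Prop) : Type u :=
  G ⊕ {p : G × G // p.1 ≠ p.2 ∧ sq p.1 p.2}

def splitAdj {G : Type u} (sq : G → G → Prop) :
    SplitVertex G sq → SplitVertex G sq → Prop
  | Sum.inl a, Sum.inl b => a = b
  | Sum.inl a, Sum.inr s => a = s.1.1
  | Sum.inr s, Sum.inl a => s.1.1 = a
  | Sum.inr s, Sum.inr t => s.1 = t.1 ∨ (s.1.1 = t.1.2 ∧ s.1.2 = t.1.1)

def splitRel {G : Type u} (sq : G → G → Prop) : G → SplitVertex G sq → Prop :=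
  fun g x => match x with
    | Sum.inl a => g = a
    | Sum.inr s => g = s.1.1 ∨ g = s.1.2

theorem stmt_14 {G : Type u} [Finite G] [Nonempty G]
    (sq : G → G → Prop) (hrefl : ∀ g, sq g g) (hsym : ∀ a b, sq a b → sq b a) :
    EdgePreserving (splitAdj sq) sq (splitRel sq) ∧
    CoSurjective (splitRel sq) ∧
    CoInjective (splitRel sq) ∧
    RelMonotone (splitAdj sq) sq (splitRel sq) ∧
    EdgeWitnessing sq (splitRel sq) ∧
    StarRefining (splitAdj sq) (splitRel sq) := by

  have key : ∀ s : {p : G × G // p.1 ≠ p.2 ∧ sq p.1 p.2}, ∀ h h' : G,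
      (h = s.1.1 ∨ h = s.1.2) → (h' = s.1.1 ∨ h' = s.1.2) → sq h h' := by
    rintro s h h' (rfl | rfl) (rfl | rfl)
    · exact hrefl _
    · exact s.2.2
    · exact hsym _ _ s.2.2
    · exact hrefl _
  have ep : EdgePreserving (splitAdj sq) sq (splitRel sq) := by
    rintro h g g' h' hg hadj hg'
    cases g with
    | inl a =>
      cases g' with
      | inl b =>
        simp only [splitRel] at hg hg'
        simp only [splitAdj] at hadj
        subst hg; subst hg'; subst hadj; exact hrefl _
      | inr s =>
        simp only [splitRel] at hg hg'
        simp only [splitAdj] at hadj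
        exact key s h h' (Or.inl (hg.trans hadj)) hg'
    | inr s =>
      cases g' with
      | inl a =>
        simp only [splitRel] at hg hg'
        simp only [splitAdj] at hadj
        exact key s h h' hg (Or.inl (hg'.trans hadj.symm))
      | inr t =>
        simp only [splitRel] at hg hg'
        simp only [splitAdj] at hadj
        rcases hadj with heq | ⟨h1, h2⟩
        · exact key s h h' hg (by rw [heq]; exact hg')
        · refine key s h h' hg ?_
          rcases hg' with rfl | rfl
          · exact Or.inr h2.symm
          · exact Or.inl h1.symm
  refine ⟨ep, ?_, ?_, ?_, ?_, ?_⟩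
  · intro g
    cases g with
    | inl a => exact ⟨a, rfl⟩
    | inr s => exact ⟨s.1.1, Or.inl rfl⟩
  · intro h
    refine ⟨Sum.inl h, ?_⟩
    ext h'; simp [splitRel]
  · intro C hC A B hAB hdisj hA hB
    have hAsub : A ⊆ Preim (splitRel sq) C := by rw [← hAB]; exact Set.subset_union_left
    have hBsub : B ⊆ Preim (splitRel sq) C := by rw [← hAB]; exact Set.subset_union_right
    have hinlC : ∀ h : G, h ∈ C → Sum.inl h ∈ A ∨ Sum.inl h ∈ B := by
      intro h hh
      have : (Sum.inl h : SplitVertex G sq) ∈ Preim (splitRel sq) C := ⟨h, hh, rfl⟩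
      rw [← hAB] at this; exact this
    have hmemAB : ∀ x : SplitVertex G sq, x ∈ Preim (splitRel sq) C → x ∈ A ∨ x ∈ B := by
      intro x hx; rw [← hAB] at hx; exact hx
    have hinlmem : ∀ h : G, (Sum.inl h : SplitVertex G sq) ∈ Preim (splitRel sq) C → h ∈ C := by
      rintro h ⟨h', hh', hr⟩
      simp only [splitRel] at hr; subst hr; exact hh'
    by_cases hBbar : ({h | h ∈ C ∧ Sum.inl h ∈ B} : Set G).Nonempty
    · by_cases hAbar : ({h | h ∈ C ∧ Sum.inl h ∈ A} : Set G).Nonempty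
      · -- both nonempty : use connectedness of C
        have hcov : ({h | h ∈ C ∧ Sum.inl h ∈ A} : Set G) ∪ {h | h ∈ C ∧ Sum.inl h ∈ B} = C := by
          ext h
          constructor
          · rintro (⟨hh, _⟩ | ⟨hh, _⟩) <;> exact hh
          · intro hh
            rcases hinlC h hh with h1 | h1
            · exact Or.inl ⟨hh, h1⟩
            · exact Or.inr ⟨hh, h1⟩
        have hd : Disjoint ({h | h ∈ C ∧ Sum.inl h ∈ A} : Set G) {h | h ∈ C ∧ Sum.inl h ∈ B} := by
          rw [Set.disjoint_left]
          rintro h ⟨_, h1⟩ ⟨_, h2⟩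
          exact Set.disjoint_left.mp hdisj h1 h2
        obtain ⟨a, ⟨haC, haA⟩, b, ⟨hbC, hbB⟩, hab⟩ := hC _ _ hcov hd hAbar hBbar
        have hne : a ≠ b := by
          rintro rfl; exact Set.disjoint_left.mp hdisj haA hbB
        set s : {p : G × G // p.1 ≠ p.2 ∧ sq p.1 p.2} := ⟨(a, b), hne, hab⟩ with hs
        set t : {p : G × G // p.1 ≠ p.2 ∧ sq p.1 p.2} := ⟨(b, a), hne.symm, hsym _ _ hab⟩ with ht
        have hsmem : (Sum.inr s : SplitVertex G sq) ∈ Preim (splitRel sq) C :=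
          ⟨a, haC, Or.inl rfl⟩
        have htmem : (Sum.inr t : SplitVertex G sq) ∈ Preim (splitRel sq) C :=
          ⟨b, hbC, Or.inl rfl⟩
        rcases hmemAB _ hsmem with hsA | hsB
        · rcases hmemAB _ htmem with htA | htB
          · exact ⟨Sum.inr t, htA, Sum.inl b, hbB, rfl⟩
          · exact ⟨Sum.inr s, hsA, Sum.inr t, htB, Or.inr ⟨rfl, rfl⟩⟩
        · exact ⟨Sum.inl a, haA, Sum.inr s, hsB, rfl⟩
      · -- no inl vertex in A : A contains some inr s
        obtain ⟨x, hxA⟩ := hA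
        cases x with
        | inl h =>
          exact absurd ⟨h, hinlmem h (hAsub hxA), hxA⟩ hAbar
        | inr s =>
          obtain ⟨h, hhC, hr⟩ := hAsub hxA
          have inlB : ∀ c : G, c ∈ C → (Sum.inl c : SplitVertex G sq) ∈ B := by
            intro c hc
            rcases hinlC c hc with h1 | h1
            · exact absurd ⟨c, hc, h1⟩ hAbar
            · exact h1
          rcases hr with heq | heq
          · exact ⟨Sum.inr s, hxA, Sum.inl h, inlB h hhC, heq.symm⟩
          · set t : {p : G × G // p.1 ≠ p.2 ∧ sq p.1 p.2} :=
              ⟨(h, s.1.1), by rw [heq]; exact s.2.1.symm, by rw [heq]; exact hsym _ _ s.2.2⟩ with ht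
            have htmem : (Sum.inr t : SplitVertex G sq) ∈ Preim (splitRel sq) C :=
              ⟨h, hhC, Or.inl rfl⟩
            rcases hmemAB _ htmem with htA | htB
            · exact ⟨Sum.inr t, htA, Sum.inl h, inlB h hhC, rfl⟩
            · exact ⟨Sum.inr s, hxA, Sum.inr t, htB, Or.inr ⟨rfl, heq.symm⟩⟩
    · -- no inl vertex in B : B contains some inr s
      obtain ⟨x, hxB⟩ := hB
      cases x with
      | inl h =>
        exact absurd ⟨h, hinlmem h (hBsub hxB), hxB⟩ hBbar
      | inr s =>
        obtain ⟨h, hhC, hr⟩ := hBsub hxB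
        have inlA : ∀ c : G, c ∈ C → (Sum.inl c : SplitVertex G sq) ∈ A := by
          intro c hc
          rcases hinlC c hc with h1 | h1
          · exact h1
          · exact absurd ⟨c, hc, h1⟩ hBbar
        rcases hr with heq | heq
        · exact ⟨Sum.inl h, inlA h hhC, Sum.inr s, hxB, heq⟩
        · set t : {p : G × G // p.1 ≠ p.2 ∧ sq p.1 p.2} :=
            ⟨(h, s.1.1), by rw [heq]; exact s.2.1.symm, by rw [heq]; exact hsym _ _ s.2.2⟩ with ht
          have htmem : (Sum.inr t : SplitVertex G sq) ∈ Preim (splitRel sq) C :=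
            ⟨h, hhC, Or.inl rfl⟩
          rcases hmemAB _ htmem with htA | htB
          · exact ⟨Sum.inr t, htA, Sum.inr s, hxB, Or.inr ⟨heq, rfl⟩⟩
          · exact ⟨Sum.inl h, inlA h hhC, Sum.inr t, htB, rfl⟩
  · intro h h' hsq
    by_cases he : h = h'
    · subst he; exact ⟨Sum.inl h, rfl, rfl⟩
    · exact ⟨Sum.inr ⟨(h, h'), he, hsq⟩, Or.inl rfl, Or.inr rfl⟩
  · intro g
    cases g with
    | inl a =>
      refine ⟨a, ?_⟩
      intro g' hadj
      cases g' with
      | inl b => simp only [splitAdj] at hadj; exact hadj.symm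
      | inr s => simp only [splitAdj] at hadj; exact Or.inl hadj.symm
    | inr s =>
      refine ⟨s.1.1, ?_⟩
      intro g' hadj
      cases g' with
      | inl b => simp only [splitAdj] at hadj; exact hadj.symm
      | inr t =>
        simp only [splitAdj] at hadj
        rcases hadj with heq | ⟨h1, h2⟩
        · exact Or.inl (congrArg Prod.fst heq).symm
        · exact Or.inr h2.symm
end

section
/- Let G, H be finite graphs and let ⊐ ⊆ H × G be edge-preserving and co-surjective. Then: (i) for every clique C of G, the image C^⊏ = {h ∈ H : ∃g ∈ C, h ⊐ g} is a clique of H, so X^⊐(C) = C^⊏ defines a function from the cliques of G to the cliques of H; (ii) X^⊐ preserves comparability: if cliques C, D of G satisfy C ⊆ D or D ⊆ C, then X^⊐(C) ⊆ X^⊐(D) or X^⊐(D) ⊆ X^⊐(C); (iii) X^⊐ is functorial: for another edge-preserving co-surjective ⊨ ⊆ I × H, one has X^{⊨∘⊐} = X^⊨ ∘ X^⊐; and (iv) if H is triangle-free and ⊐ is moreover co-bijective and edge-surjective, then X^⊐ is surjective onto the cliques of H. -/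
theorem stmt_16 {G H I : Type*}
    [Finite G] [Nonempty G] [Finite H] [Nonempty H] [Finite I] [Nonempty I]
    (sqG : G → G → Prop) (sqH : H → H → Prop) (sqI : I → I → Prop)
    (hGr : ∀ g, sqG g g) (hGs : ∀ a b, sqG a b → sqG b a)
    (hHr : ∀ h, sqH h h) (hHs : ∀ a b, sqH a b → sqH b a)
    (hIr : ∀ i, sqI i i) (hIs : ∀ a b, sqI a b → sqI b a)
    (R : H → G → Prop)
    (hep : EdgePreserving sqG sqH R) (hco : CoSurjective R) :
    (∀ C : Set G, IsCliqueSet sqG C → IsCliqueSet sqH (Img R C)) ∧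
    (∀ C D : Set G, IsCliqueSet sqG C → IsCliqueSet sqG D → (C ⊆ D ∨ D ⊆ C) →
      (Img R C ⊆ Img R D ∨ Img R D ⊆ Img R C)) ∧
    (∀ S : I → H → Prop, EdgePreserving sqH sqI S → CoSurjective S →
      ∀ C : Set G, IsCliqueSet sqG C → Img (RelComp S R) C = Img S (Img R C)) ∧
    (TriangleFree sqH → CoInjective R → EdgeSurjective sqG sqH R →
      ∀ D : Set H, IsCliqueSet sqH D → ∃ C : Set G, IsCliqueSet sqG C ∧ Img R C = D) := by
  refine ⟨?_, ?_, ?_, ?_⟩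
  · rintro C ⟨⟨g, hg⟩, hcl⟩
    obtain ⟨h, hh⟩ := hco g
    refine ⟨⟨h, g, hg, hh⟩, ?_⟩
    rintro a ⟨ga, hga, hRa⟩ b ⟨gb, hgb, hRb⟩
    exact hep a ga gb b hRa (hcl ga hga gb hgb) hRb
  · rintro C D _ _ (hCD | hDC)
    · exact Or.inl (fun h ⟨g, hg, hR⟩ => ⟨g, hCD hg, hR⟩)
    · exact Or.inr (fun h ⟨g, hg, hR⟩ => ⟨g, hDC hg, hR⟩)
  · intro S _ _ C _
    ext i
    constructor
    · rintro ⟨g, hg, h, hS, hR⟩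
      exact ⟨h, ⟨g, hg, hR⟩, hS⟩
    · rintro ⟨h, ⟨g, hg, hR⟩, hS⟩
      exact ⟨g, hg, h, hS, hR⟩
  · rintro htf hci hes D ⟨⟨h, hh⟩, hcl⟩
    by_cases hsing : ∀ h' ∈ D, h' = h
    · obtain ⟨g, hg⟩ := hci h
      refine ⟨{g}, ⟨⟨g, rfl⟩, by rintro a rfl b rfl; exact hGr _⟩, ?_⟩
      ext h'
      constructor
      · rintro ⟨g', rfl, hR⟩
        have : h' ∈ ({h} : Set H) := hg ▸ hR
        rw [this]; exact hh
      · intro hh'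
        have hh'' := hsing h' hh'
        refine ⟨g, rfl, ?_⟩
        have : h ∈ {h'' | R h'' g} := hg ▸ rfl
        rw [hh'']; exact this
    · push_neg at hsing
      obtain ⟨h', hh', hne⟩ := hsing
      have hadj : sqH h h' := hcl h hh h' hh'
      obtain ⟨g, g', hRg, hgg', hRg'⟩ := hes h h' hadj
      have hDeq : D = {h, h'} := by
        ext x
        constructor
        · intro hx
          by_contra hxn
          simp only [Set.mem_insert_iff, Set.mem_singleton_iff, not_or] at hxn
          exact htf x h h' hxn.1 (Ne.symm hne) hxn.2
            (hcl x hx h hh) hadj (hcl x hx h' hh')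
        · rintro (rfl | rfl)
          · exact hh
          · exact hh'
      refine ⟨{g, g'}, ⟨⟨g, Or.inl rfl⟩, ?_⟩, ?_⟩
      · rintro a (rfl | rfl) b (rfl | rfl)
        · exact hGr _
        · exact hgg'
        · exact hGs _ _ hgg'
        · exact hGr _
      · rw [hDeq]
        ext x
        constructor
        · rintro ⟨c, (rfl | rfl), hRx⟩
          · by_contra hxn
            simp only [Set.mem_insert_iff, Set.mem_singleton_iff, not_or] at hxn
            have h1 : sqH x h := hep x c c h hRx (hGr c) hRg
            have h2 : sqH x h' := hep x c g' h' hRx hgg' hRg'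
            exact htf h x h' (Ne.symm hxn.1) hxn.2 (Ne.symm hne) (hHs _ _ h1) h2 hadj
          · by_contra hxn
            simp only [Set.mem_insert_iff, Set.mem_singleton_iff, not_or] at hxn
            have h1 : sqH x h := hep x c g h hRx (hGs _ _ hgg') hRg
            have h2 : sqH x h' := hep x c c h' hRx (hGr c) hRg'
            exact htf h x h' (Ne.symm hxn.1) hxn.2 (Ne.symm hne) (hHs _ _ h1) h2 hadj
        · rintro (rfl | rfl)
          · exact ⟨g, Or.inl rfl, hRg⟩
          · exact ⟨g', Or.inr rfl, hRg'⟩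
end
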